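/- Let n > 2. Every (A ∪ B)-regular function-level MRes-R refutation of CR_n has at least 2^{n−1} lines. -/

import Mathlib

namespace MResR

/-- A clause over `Fin k`: a finite set of literals (variable, polarity). -/
abbrev Clause (k : ℕ) := Finset (Fin k × Bool)

/-- No variable occurs in both polarities. -/
def IsClause {k : ℕ} (C : Clause k) : Prop :=
  ∀ v : Fin k, ¬ ((v, true) ∈ C ∧ (v, false) ∈ C)

/-- A prenex QBF on `k` variables in prefix order, `q v = true` meaning `v` is
existential, with a CNF matrix. -/
structure QBF (k : ℕ) where
  q : Fin k → Bool
  matrix : Finset (Clause k)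
  matrix_clauses : ∀ C ∈ matrix, IsClause C

/-- A candidate strategy function (possibly undefined, `none` playing the role of `*`). -/
abbrev Strategy (k : ℕ) := (Fin k → Bool) → Option Bool

/-- A strategy for the universal variable `u` may only depend on the existential
variables to the left of `u`. -/
def IsStrategy {k : ℕ} (Q : QBF k) (u : Fin k) (H : Strategy k) : Prop :=
  ∀ α α' : Fin k → Bool, (∀ v : Fin k, Q.q v = true → v < u → α v = α' v) → H α = H α'

/-- Two strategies are consistent if they never give conflicting defined values. -/
def Consistent {k : ℕ} (H H' : Strategy k) : Prop :=
  ∀ (α : Fin k → Bool) (c c' : Bool), H α = some c → H' α = some c' → c = c'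

/-- The union `H ∘ H'` of two (consistent) strategies. -/
def unionStrat {k : ℕ} (H H' : Strategy k) : Strategy k :=
  fun α => match H α with
    | some c => some c
    | none => H' α

/-- The if-else combination `H ⋈x H'`. -/
def iteStrat {k : ℕ} (x : Fin k) (H H' : Strategy k) : Strategy k :=
  fun α => if α x = true then H α else H' α

/-- The existential subclause of a clause. -/
def existSub {k : ℕ} (Q : QBF k) (C : Clause k) : Clause k :=
  C.filter (fun l => Q.q l.1 = true)

/-- The constant strategy introduced by an axiom download of `C`: the constant
`some (¬p)` if `(u, p) ∈ C`, and the constant `none` if `u` does not occur in `C`. -/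
def axiomStrat {k : ℕ} (C : Clause k) (u : Fin k) : Strategy k :=
  fun _ => if (u, true) ∈ C then some false else if (u, false) ∈ C then some true else none

/-- A line of a function-level MRes-R derivation: a clause together with one
strategy function for every variable (only the universal ones are relevant). -/
structure Line (k : ℕ) where
  C : Clause k
  H : Fin k → Strategy k

/-- Justification of a line: axiom download of a matrix clause, or resolution of
two earlier lines on an existential pivot. -/
inductive Just (k : ℕ) where
  | ax : Clause k → Just k
  | res : ℕ → ℕ → Fin k → Just k

/-- Well-formedness of a line: its clause is a clause on existential variables
only, and every universal variable gets a genuine strategy. -/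
def LineOK {k : ℕ} (Q : QBF k) (L : Line k) : Prop :=
  IsClause L.C ∧ (∀ l ∈ L.C, Q.q l.1 = true) ∧
    ∀ u : Fin k, Q.q u = false → IsStrategy Q u (L.H u)

/-- Validity of the `i`-th step of a derivation, given its justification. -/
def StepOK {k : ℕ} (Q : QBF k) (line : ℕ → Line k) : ℕ → Just k → Prop
  | i, .ax C =>
      C ∈ Q.matrix ∧ (line i).C = existSub Q C ∧
      ∀ u : Fin k, Q.q u = false → (line i).H u = axiomStrat C u
  | i, .res a b x =>
      a < i ∧ b < i ∧ Q.q x = true ∧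
      (x, true) ∈ (line a).C ∧ (x, false) ∈ (line b).C ∧
      (line i).C = ((line a).C.erase (x, true)) ∪ ((line b).C.erase (x, false)) ∧
      ∀ u : Fin k, Q.q u = false →
        (x < u → (line i).H u = iteStrat x ((line b).H u) ((line a).H u)) ∧
        (u < x → Consistent ((line a).H u) ((line b).H u) ∧
          (line i).H u = unionStrat ((line a).H u) ((line b).H u))

/-- A function-level MRes-R derivation from the QBF `Q`: lines `0, …, m-1`
(`line i` and `just i` are irrelevant for `i ≥ m`). -/
structure Deriv {k : ℕ} (Q : QBF k) where
  m : ℕ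
  m_pos : 0 < m
  line : ℕ → Line k
  just : ℕ → Just k
  lineOK : ∀ i < m, LineOK Q (line i)
  step : ∀ i < m, StepOK Q line i (just i)

/-- A derivation is a refutation if its final clause is empty. -/
def IsRefutation {k : ℕ} {Q : QBF k} (π : Deriv Q) : Prop :=
  (π.line (π.m - 1)).C = ∅

/-- `α` falsifies every literal of `C`. -/
def FalsifiesClause {k : ℕ} (α : Fin k → Bool) (C : Clause k) : Prop :=
  ∀ l ∈ C, α l.1 = ! l.2

end MResR

namespace MResR

/-! ## The completion principle formulas `CR_n` -/

/-- Number of variables of `CR_n`: the `n²` existential variables `x_{ij}`,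
then the universal variable `z`, then the existential variables
`a_0, …, a_{n-1}, b_0, …, b_{n-1}`. -/
def kCR (n : ℕ) : ℕ := n * n + 2 * n + 1

lemma xVar_lt_sq (n : ℕ) (i j : Fin n) : i.val * n + j.val < n * n := by
  have h1 : i.val + 1 ≤ n := i.isLt
  have h2 : (i.val + 1) * n ≤ n * n := Nat.mul_le_mul_right n h1
  have h3 := j.isLt
  nlinarith

lemma xVar_lt (n : ℕ) (i j : Fin n) : i.val * n + j.val < kCR n := by
  have := xVar_lt_sq n i j
  unfold kCR
  omega

/-- The variable `x_{ij}`, at position `i * n + j` of the prefix. -/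
def xVar (n : ℕ) (i j : Fin n) : Fin (kCR n) := ⟨i.val * n + j.val, xVar_lt n i j⟩

/-- The universal variable `z`, at position `n²` of the prefix. -/
def zVar (n : ℕ) : Fin (kCR n) := ⟨n * n, by unfold kCR; omega⟩

/-- The variable `a_i`, at position `n² + 1 + i` of the prefix. -/
def aVar (n : ℕ) (i : Fin n) : Fin (kCR n) :=
  ⟨n * n + 1 + i.val, by have := i.isLt; unfold kCR; omega⟩

/-- The variable `b_j`, at position `n² + 1 + n + j` of the prefix. -/
def bVar (n : ℕ) (j : Fin n) : Fin (kCR n) :=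
  ⟨n * n + 1 + n + j.val, by have := j.isLt; unfold kCR; omega⟩

/-- The clause `A_{ij} = x_{ij} ∨ z ∨ a_i`. -/
def Aclause (n : ℕ) (i j : Fin n) : Clause (kCR n) :=
  {(xVar n i j, true), (zVar n, true), (aVar n i, true)}

/-- The clause `B_{ij} = ¬x_{ij} ∨ ¬z ∨ b_j`. -/
def Bclause (n : ℕ) (i j : Fin n) : Clause (kCR n) :=
  {(xVar n i j, false), (zVar n, false), (bVar n j, true)}

/-- The clause `L_A = ¬a_0 ∨ ⋯ ∨ ¬a_{n-1}`. -/
def LAclause (n : ℕ) : Clause (kCR n) :=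
  Finset.univ.image (fun i : Fin n => (aVar n i, false))

/-- The clause `L_B = ¬b_0 ∨ ⋯ ∨ ¬b_{n-1}`. -/
def LBclause (n : ℕ) : Clause (kCR n) :=
  Finset.univ.image (fun j : Fin n => (bVar n j, false))

/-- The matrix of `CR_n`. -/
def CRmatrix (n : ℕ) : Finset (Clause (kCR n)) :=
  (Finset.univ.image (fun p : Fin n × Fin n => Aclause n p.1 p.2)) ∪
  (Finset.univ.image (fun p : Fin n × Fin n => Bclause n p.1 p.2)) ∪
  {LAclause n, LBclause n}

lemma CRmatrix_clauses (n : ℕ) : ∀ C ∈ CRmatrix n, IsClause C := by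
  intro C hC v hv
  obtain ⟨h1, h2⟩ := hv
  simp only [CRmatrix, Finset.mem_union, Finset.mem_image, Finset.mem_univ, true_and,
    Finset.mem_insert, Finset.mem_singleton] at hC
  rcases hC with (⟨p, hp⟩ | ⟨p, hp⟩) | (h | h)
  · subst hp
    simp [Aclause, Prod.ext_iff] at h2
  · subst hp
    have hxlt := xVar_lt_sq n p.1 p.2
    simp only [Bclause, Finset.mem_insert, Finset.mem_singleton, Prod.mk.injEq] at h1 h2
    rcases h1 with ⟨_, h⟩ | ⟨_, h⟩ | ⟨hv1, _⟩
    · exact absurd h (by simp)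
    · exact absurd h (by simp)
    rcases h2 with ⟨hv2, _⟩ | ⟨hv2, _⟩ | ⟨_, h⟩
    · have := hv1.symm.trans hv2
      simp only [bVar, xVar, Fin.mk.injEq] at this
      omega
    · have := hv1.symm.trans hv2
      simp only [bVar, zVar, Fin.mk.injEq] at this
      omega
    · exact absurd h (by simp)
  · subst h
    simp [LAclause, Prod.ext_iff] at h1
  · subst h
    simp [LBclause, Prod.ext_iff] at h1

/-- The completion principle QBF `CR_n`: all variables existential except `z`. -/
def CRqbf (n : ℕ) : QBF (kCR n) where
  q := fun v => decide (v.val ≠ n * n)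
  matrix := CRmatrix n
  matrix_clauses := CRmatrix_clauses n

/-- The clause `C` contains no variable of `A ∪ B`. -/
def NoAB (n : ℕ) (C : Clause (kCR n)) : Prop :=
  ∀ l ∈ C, (∀ i : Fin n, l.1 ≠ aVar n i) ∧ (∀ j : Fin n, l.1 ≠ bVar n j)

/-- The set `S'` of lines from which there is a directed path in the derivation
graph to the final line, all of whose lines have clauses containing no variable
of `A ∪ B`. -/
inductive InS' {n : ℕ} (π : Deriv (CRqbf n)) : ℕ → Prop where
  | base : NoAB n (π.line (π.m - 1)).C → InS' π (π.m - 1)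
  | step {i j : ℕ} (a b : ℕ) (x : Fin (kCR n)) :
      j < π.m → π.just j = Just.res a b x → (i = a ∨ i = b) →
      NoAB n (π.line i).C → InS' π j → InS' π i

/-- The set `S`: lines of `S'` that are resolvents of two lines neither of
which belongs to `S'`. -/
def InS {n : ℕ} (π : Deriv (CRqbf n)) (i : ℕ) : Prop :=
  i < π.m ∧ InS' π i ∧
    ∃ (a b : ℕ) (x : Fin (kCR n)),
      π.just i = Just.res a b x ∧ ¬ InS' π a ∧ ¬ InS' π b

end MResR

namespace MResR

/-- Edge relation of the derivation graph `G_Π`: an edge from each hypothesis of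
a resolution step to its resolvent. -/
def Edge {k : ℕ} {Q : QBF k} (π : Deriv Q) (i j : ℕ) : Prop :=
  j < π.m ∧ ∃ (a b : ℕ) (x : Fin k), π.just j = Just.res a b x ∧ (i = a ∨ i = b)

/-- Existence of a directed path in the derivation graph `G_Π`. -/
def Reaches {k : ℕ} {Q : QBF k} (π : Deriv Q) : ℕ → ℕ → Prop :=
  Relation.ReflTransGen (Edge π)

/-- `i` is an axiom line of the derivation. -/
def IsAxiomLine {k : ℕ} {Q : QBF k} (π : Deriv Q) (i : ℕ) : Prop :=
  i < π.m ∧ ∃ C : Clause k, π.just i = Just.ax C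

/-- `S`-regularity: no directed path in `G_Π` from an axiom line to the final
line contains two resolvent lines whose pivots are the same variable of `S`. -/
def SRegular {k : ℕ} {Q : QBF k} (π : Deriv Q) (S : Set (Fin k)) : Prop :=
  ¬ ∃ (i j i₀ : ℕ) (a b a' b' : ℕ) (x : Fin k),
      i ≠ j ∧ x ∈ S ∧
      π.just i = Just.res a b x ∧ π.just j = Just.res a' b' x ∧
      IsAxiomLine π i₀ ∧ Reaches π i₀ i ∧ Reaches π i j ∧ Reaches π j (π.m - 1)

/-- The set `A ∪ B` of variables of `CR_n`. -/
def ABSet (n : ℕ) : Set (Fin (kCR n)) :=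
  {v | (∃ i : Fin n, v = aVar n i) ∨ (∃ j : Fin n, v = bVar n j)}

end MResR

/-! ### Auxiliary development for the lower bound -/

namespace MResR

section Basics

variable {n : ℕ}

lemma q_xVar (i j : Fin n) : (CRqbf n).q (xVar n i j) = true := by
  have := xVar_lt_sq n i j
  simp only [CRqbf, xVar, decide_eq_true_eq]
  omega

lemma q_zVar : (CRqbf n).q (zVar n) = false := by
  simp [CRqbf, zVar]

lemma q_aVar (i : Fin n) : (CRqbf n).q (aVar n i) = true := by
  simp only [CRqbf, aVar, decide_eq_true_eq]
  omega

lemma q_bVar (j : Fin n) : (CRqbf n).q (bVar n j) = true := by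
  simp only [CRqbf, bVar, decide_eq_true_eq]
  omega

lemma xVar_ne_zVar (i j : Fin n) : xVar n i j ≠ zVar n := by
  have := xVar_lt_sq n i j
  simp only [xVar, zVar, ne_eq, Fin.mk.injEq]
  omega

lemma xVar_ne_aVar (i j i' : Fin n) : xVar n i j ≠ aVar n i' := by
  have := xVar_lt_sq n i j
  simp only [xVar, aVar, ne_eq, Fin.mk.injEq]
  omega

lemma xVar_ne_bVar (i j j' : Fin n) : xVar n i j ≠ bVar n j' := by
  have := xVar_lt_sq n i j
  simp only [xVar, bVar, ne_eq, Fin.mk.injEq]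
  omega

lemma zVar_ne_aVar (i : Fin n) : zVar n ≠ aVar n i := by
  simp only [zVar, aVar, ne_eq, Fin.mk.injEq]
  omega

lemma zVar_ne_bVar (j : Fin n) : zVar n ≠ bVar n j := by
  simp only [zVar, bVar, ne_eq, Fin.mk.injEq]
  omega

lemma aVar_ne_bVar (i j : Fin n) : aVar n i ≠ bVar n j := by
  have := i.isLt
  simp only [aVar, bVar, ne_eq, Fin.mk.injEq]
  omega

lemma aVar_inj {i i' : Fin n} (h : aVar n i = aVar n i') : i = i' := by
  simp only [aVar, Fin.mk.injEq] at h
  exact Fin.ext (by omega)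

lemma bVar_inj {j j' : Fin n} (h : bVar n j = bVar n j') : j = j' := by
  simp only [bVar, Fin.mk.injEq] at h
  exact Fin.ext (by omega)

lemma xVar_inj {i j i' j' : Fin n} (h : xVar n i j = xVar n i' j') :
    i = i' ∧ j = j' := by
  have hj := j.isLt
  have hj' := j'.isLt
  have hi := i.isLt
  have hi' := i'.isLt
  simp only [xVar, Fin.mk.injEq] at h
  have hii : i.val = i'.val := by
    rcases Nat.lt_trichotomy i.val i'.val with hlt | he | hgt
    · exfalso
      have hm : (i.val + 1) * n ≤ i'.val * n := Nat.mul_le_mul_right n hlt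
      rw [add_mul, one_mul] at hm
      omega
    · exact he
    · exfalso
      have hm : (i'.val + 1) * n ≤ i.val * n := Nat.mul_le_mul_right n hgt
      rw [add_mul, one_mul] at hm
      omega
  rw [hii] at h
  exact ⟨Fin.ext hii, Fin.ext (by omega)⟩

lemma var_trichotomy (hn : 0 < n) (v : Fin (kCR n)) :
    (∃ i j, v = xVar n i j) ∨ v = zVar n ∨ (∃ i, v = aVar n i) ∨ (∃ j, v = bVar n j) := by
  have hv := v.isLt
  simp only [kCR] at hv
  by_cases h : v.val < n * n
  · left
    have hdiv : v.val / n < n := by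
      rw [Nat.div_lt_iff_lt_mul hn]; exact h
    refine ⟨⟨v.val / n, hdiv⟩, ⟨v.val % n, Nat.mod_lt _ hn⟩, ?_⟩
    apply Fin.ext
    simp only [xVar]
    rw [mul_comm, Nat.div_add_mod]
  · by_cases h2 : v.val = n * n
    · right; left; exact Fin.ext h2
    · by_cases h3 : v.val < n * n + 1 + n
      · right; right; left
        refine ⟨⟨v.val - (n * n + 1), by omega⟩, ?_⟩
        apply Fin.ext
        simp only [aVar]
        omega
      · right; right; right
        refine ⟨⟨v.val - (n * n + 1 + n), by omega⟩, ?_⟩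
        apply Fin.ext
        simp only [bVar]
        omega

lemma mem_Aclause_iff (i j : Fin n) (l : Fin (kCR n) × Bool) :
    l ∈ Aclause n i j ↔ l = (xVar n i j, true) ∨ l = (zVar n, true) ∨ l = (aVar n i, true) := by
  simp [Aclause]

lemma mem_Bclause_iff (i j : Fin n) (l : Fin (kCR n) × Bool) :
    l ∈ Bclause n i j ↔ l = (xVar n i j, false) ∨ l = (zVar n, false) ∨ l = (bVar n j, true) := by
  simp [Bclause]

lemma mem_LA_iff (l : Fin (kCR n) × Bool) :
    l ∈ LAclause n ↔ ∃ i, l = (aVar n i, false) := by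
  simp [LAclause, eq_comm]

lemma mem_LB_iff (l : Fin (kCR n) × Bool) :
    l ∈ LBclause n ↔ ∃ j, l = (bVar n j, false) := by
  simp [LBclause, eq_comm]

lemma mem_existSub_iff (C : Clause (kCR n)) (l : Fin (kCR n) × Bool) :
    l ∈ existSub (CRqbf n) C ↔ l ∈ C ∧ (CRqbf n).q l.1 = true := by
  simp [existSub]

lemma mem_CRmatrix_iff (C : Clause (kCR n)) :
    C ∈ (CRqbf n).matrix ↔
      (∃ i j, C = Aclause n i j) ∨ (∃ i j, C = Bclause n i j) ∨
      C = LAclause n ∨ C = LBclause n := by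
  show C ∈ CRmatrix n ↔ _
  simp only [CRmatrix, Finset.mem_union, Finset.mem_image, Finset.mem_univ, true_and,
    Finset.mem_insert, Finset.mem_singleton]
  constructor
  · rintro ((⟨p, hp⟩ | ⟨p, hp⟩) | (h | h))
    · exact Or.inl ⟨p.1, p.2, hp.symm⟩
    · exact Or.inr (Or.inl ⟨p.1, p.2, hp.symm⟩)
    · exact Or.inr (Or.inr (Or.inl h))
    · exact Or.inr (Or.inr (Or.inr h))
  · rintro (⟨i, j, h⟩ | ⟨i, j, h⟩ | h | h)
    · exact Or.inl (Or.inl ⟨(i, j), h.symm⟩)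
    · exact Or.inl (Or.inr ⟨(i, j), h.symm⟩)
    · exact Or.inr (Or.inl h)
    · exact Or.inr (Or.inr h)

end Basics

section Location

variable {n : ℕ}

/-- Which matrix clauses contain a given literal. -/
lemma loc_aTrue {C : Clause (kCR n)} (hC : C ∈ (CRqbf n).matrix) {i : Fin n}
    (h : (aVar n i, true) ∈ C) : ∃ j, C = Aclause n i j := by
  rcases (mem_CRmatrix_iff C).1 hC with ⟨i', j', rfl⟩ | ⟨i', j', rfl⟩ | rfl | rfl
  · rcases (mem_Aclause_iff _ _ _).1 h with h | h | h
    · exact absurd (congrArg Prod.fst h) (by simpa using (xVar_ne_aVar i' j' i).symm)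
    · exact absurd (congrArg Prod.fst h) (by simpa using (zVar_ne_aVar i).symm)
    · exact ⟨j', by rw [(aVar_inj (congrArg Prod.fst h)).symm]⟩
  · rcases (mem_Bclause_iff _ _ _).1 h with h | h | h
    · exact absurd (congrArg Prod.snd h) (by simp)
    · exact absurd (congrArg Prod.snd h) (by simp)
    · exact absurd (congrArg Prod.fst h) (by simpa using (aVar_ne_bVar i j'))
  · rcases (mem_LA_iff _).1 h with ⟨i', h⟩
    exact absurd (congrArg Prod.snd h) (by simp)
  · rcases (mem_LB_iff _).1 h with ⟨j', h⟩
    exact absurd (congrArg Prod.snd h) (by simp)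

lemma loc_aFalse {C : Clause (kCR n)} (hC : C ∈ (CRqbf n).matrix) {i : Fin n}
    (h : (aVar n i, false) ∈ C) : C = LAclause n := by
  rcases (mem_CRmatrix_iff C).1 hC with ⟨i', j', rfl⟩ | ⟨i', j', rfl⟩ | rfl | rfl
  · rcases (mem_Aclause_iff _ _ _).1 h with h | h | h
    · exact absurd (congrArg Prod.snd h) (by simp)
    · exact absurd (congrArg Prod.snd h) (by simp)
    · exact absurd (congrArg Prod.snd h) (by simp)
  · rcases (mem_Bclause_iff _ _ _).1 h with h | h | h
    · exact absurd (congrArg Prod.fst h) (by simpa using (xVar_ne_aVar i' j' i).symm)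
    · exact absurd (congrArg Prod.fst h) (by simpa using (zVar_ne_aVar i).symm)
    · exact absurd (congrArg Prod.snd h) (by simp)
  · rfl
  · rcases (mem_LB_iff _).1 h with ⟨j', h⟩
    exact absurd (congrArg Prod.fst h) (by simpa using (aVar_ne_bVar i j'))

lemma loc_bTrue {C : Clause (kCR n)} (hC : C ∈ (CRqbf n).matrix) {j : Fin n}
    (h : (bVar n j, true) ∈ C) : ∃ i, C = Bclause n i j := by
  rcases (mem_CRmatrix_iff C).1 hC with ⟨i', j', rfl⟩ | ⟨i', j', rfl⟩ | rfl | rfl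
  · rcases (mem_Aclause_iff _ _ _).1 h with h | h | h
    · exact absurd (congrArg Prod.fst h) (by simpa using (xVar_ne_bVar i' j' j).symm)
    · exact absurd (congrArg Prod.fst h) (by simpa using (zVar_ne_bVar j).symm)
    · exact absurd (congrArg Prod.fst h) (by simpa using (aVar_ne_bVar i' j).symm)
  · rcases (mem_Bclause_iff _ _ _).1 h with h | h | h
    · exact absurd (congrArg Prod.snd h) (by simp)
    · exact absurd (congrArg Prod.snd h) (by simp)
    · exact ⟨i', by rw [(bVar_inj (congrArg Prod.fst h)).symm]⟩
  · rcases (mem_LA_iff _).1 h with ⟨i', h⟩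
    exact absurd (congrArg Prod.snd h) (by simp)
  · rcases (mem_LB_iff _).1 h with ⟨j', h⟩
    exact absurd (congrArg Prod.snd h) (by simp)

lemma loc_bFalse {C : Clause (kCR n)} (hC : C ∈ (CRqbf n).matrix) {j : Fin n}
    (h : (bVar n j, false) ∈ C) : C = LBclause n := by
  rcases (mem_CRmatrix_iff C).1 hC with ⟨i', j', rfl⟩ | ⟨i', j', rfl⟩ | rfl | rfl
  · rcases (mem_Aclause_iff _ _ _).1 h with h | h | h
    · exact absurd (congrArg Prod.snd h) (by simp)
    · exact absurd (congrArg Prod.snd h) (by simp)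
    · exact absurd (congrArg Prod.snd h) (by simp)
  · rcases (mem_Bclause_iff _ _ _).1 h with h | h | h
    · exact absurd (congrArg Prod.fst h) (by simpa using (xVar_ne_bVar i' j' j).symm)
    · exact absurd (congrArg Prod.fst h) (by simpa using (zVar_ne_bVar j).symm)
    · exact absurd (congrArg Prod.snd h) (by simp)
  · rcases (mem_LA_iff _).1 h with ⟨i', h⟩
    exact absurd (congrArg Prod.fst h) (by simpa using (aVar_ne_bVar i' j).symm)
  · rfl

lemma loc_xTrue {C : Clause (kCR n)} (hC : C ∈ (CRqbf n).matrix) {i j : Fin n}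
    (h : (xVar n i j, true) ∈ C) : C = Aclause n i j := by
  rcases (mem_CRmatrix_iff C).1 hC with ⟨i', j', rfl⟩ | ⟨i', j', rfl⟩ | rfl | rfl
  · rcases (mem_Aclause_iff _ _ _).1 h with h | h | h
    · obtain ⟨h1, h2⟩ := xVar_inj (congrArg Prod.fst h)
      rw [h1, h2]
    · exact absurd (congrArg Prod.fst h) (by simpa using (xVar_ne_zVar i j))
    · exact absurd (congrArg Prod.fst h) (by simpa using (xVar_ne_aVar i j i'))
  · rcases (mem_Bclause_iff _ _ _).1 h with h | h | h
    · exact absurd (congrArg Prod.snd h) (by simp)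
    · exact absurd (congrArg Prod.snd h) (by simp)
    · exact absurd (congrArg Prod.fst h) (by simpa using (xVar_ne_bVar i j j'))
  · rcases (mem_LA_iff _).1 h with ⟨i', h⟩
    exact absurd (congrArg Prod.snd h) (by simp)
  · rcases (mem_LB_iff _).1 h with ⟨j', h⟩
    exact absurd (congrArg Prod.snd h) (by simp)

lemma loc_xFalse {C : Clause (kCR n)} (hC : C ∈ (CRqbf n).matrix) {i j : Fin n}
    (h : (xVar n i j, false) ∈ C) : C = Bclause n i j := by
  rcases (mem_CRmatrix_iff C).1 hC with ⟨i', j', rfl⟩ | ⟨i', j', rfl⟩ | rfl | rfl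
  · rcases (mem_Aclause_iff _ _ _).1 h with h | h | h
    · exact absurd (congrArg Prod.snd h) (by simp)
    · exact absurd (congrArg Prod.snd h) (by simp)
    · exact absurd (congrArg Prod.snd h) (by simp)
  · rcases (mem_Bclause_iff _ _ _).1 h with h | h | h
    · obtain ⟨h1, h2⟩ := xVar_inj (congrArg Prod.fst h)
      rw [h1, h2]
    · exact absurd (congrArg Prod.fst h) (by simpa using (xVar_ne_zVar i j))
    · exact absurd (congrArg Prod.fst h) (by simpa using (xVar_ne_bVar i j j'))
  · rcases (mem_LA_iff _).1 h with ⟨i', h⟩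
    exact absurd (congrArg Prod.fst h) (by simpa using (xVar_ne_aVar i j i'))
  · rcases (mem_LB_iff _).1 h with ⟨j', h⟩
    exact absurd (congrArg Prod.fst h) (by simpa using (xVar_ne_bVar i j j'))

/-- existSub membership for the four clause types. -/
lemma mem_existSub_A (i j : Fin n) (l : Fin (kCR n) × Bool) :
    l ∈ existSub (CRqbf n) (Aclause n i j) ↔
      l = (xVar n i j, true) ∨ l = (aVar n i, true) := by
  rw [mem_existSub_iff, mem_Aclause_iff]
  constructor
  · rintro ⟨(rfl | rfl | rfl), hq⟩
    · exact Or.inl rfl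
    · rw [q_zVar] at hq; simp at hq
    · exact Or.inr rfl
  · rintro (rfl | rfl)
    · exact ⟨Or.inl rfl, q_xVar i j⟩
    · exact ⟨Or.inr (Or.inr rfl), q_aVar i⟩

lemma mem_existSub_B (i j : Fin n) (l : Fin (kCR n) × Bool) :
    l ∈ existSub (CRqbf n) (Bclause n i j) ↔
      l = (xVar n i j, false) ∨ l = (bVar n j, true) := by
  rw [mem_existSub_iff, mem_Bclause_iff]
  constructor
  · rintro ⟨(rfl | rfl | rfl), hq⟩
    · exact Or.inl rfl
    · rw [q_zVar] at hq; simp at hq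
    · exact Or.inr rfl
  · rintro (rfl | rfl)
    · exact ⟨Or.inl rfl, q_xVar i j⟩
    · exact ⟨Or.inr (Or.inr rfl), q_bVar j⟩

lemma existSub_LA : existSub (CRqbf n) (LAclause n) = LAclause n := by
  apply Finset.filter_true_of_mem
  intro l hl
  rcases (mem_LA_iff _).1 hl with ⟨i, rfl⟩
  exact q_aVar i

lemma existSub_LB : existSub (CRqbf n) (LBclause n) = LBclause n := by
  apply Finset.filter_true_of_mem
  intro l hl
  rcases (mem_LB_iff _).1 hl with ⟨j, rfl⟩
  exact q_bVar j

/-- Values of axiom strategies at `z`. -/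
lemma axiomStrat_A (i j : Fin n) (α : Fin (kCR n) → Bool) :
    axiomStrat (Aclause n i j) (zVar n) α = some false := by
  simp only [axiomStrat]
  rw [if_pos]
  exact (mem_Aclause_iff i j _).2 (Or.inr (Or.inl rfl))

lemma axiomStrat_B (i j : Fin n) (α : Fin (kCR n) → Bool) :
    axiomStrat (Bclause n i j) (zVar n) α = some true := by
  simp only [axiomStrat]
  rw [if_neg, if_pos]
  · exact (mem_Bclause_iff i j _).2 (Or.inr (Or.inl rfl))
  · intro h
    rcases (mem_Bclause_iff i j _).1 h with h | h | h
    · exact absurd (congrArg Prod.snd h) (by simp)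
    · exact absurd (congrArg Prod.snd h) (by simp)
    · exact absurd (congrArg Prod.fst h) (by simpa using (zVar_ne_bVar j))

lemma axiomStrat_LA (α : Fin (kCR n) → Bool) :
    axiomStrat (LAclause n) (zVar n) α = none := by
  simp only [axiomStrat]
  rw [if_neg, if_neg]
  · intro h
    rcases (mem_LA_iff _).1 h with ⟨i, h⟩
    exact absurd (congrArg Prod.fst h) (by simpa using (zVar_ne_aVar i))
  · intro h
    rcases (mem_LA_iff _).1 h with ⟨i, h⟩
    exact absurd (congrArg Prod.snd h) (by simp)

lemma axiomStrat_LB (α : Fin (kCR n) → Bool) :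
    axiomStrat (LBclause n) (zVar n) α = none := by
  simp only [axiomStrat]
  rw [if_neg, if_neg]
  · intro h
    rcases (mem_LB_iff _).1 h with ⟨j, h⟩
    exact absurd (congrArg Prod.fst h) (by simpa using (zVar_ne_bVar j))
  · intro h
    rcases (mem_LB_iff _).1 h with ⟨j, h⟩
    exact absurd (congrArg Prod.snd h) (by simp)

end Location

section Graph

variable {k : ℕ} {Q : QBF k} (π : Deriv Q)

lemma edge_lt {i j : ℕ} (h : Edge π i j) : i < j := by
  obtain ⟨hj, a, b, x, hjust, hab⟩ := h
  have hs := π.step j hj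
  rw [hjust] at hs
  obtain ⟨ha, hb, -⟩ := hs
  rcases hab with rfl | rfl
  · exact ha
  · exact hb

lemma reaches_le {i j : ℕ} (h : Reaches π i j) : i ≤ j := by
  induction h with
  | refl => exact le_rfl
  | tail _ hedge ih => exact le_trans ih (le_of_lt (edge_lt π hedge))

lemma exists_axiom_ancestor : ∀ i, i < π.m → ∃ ℓ, IsAxiomLine π ℓ ∧ Reaches π ℓ i := by
  intro i
  induction i using Nat.strong_induction_on with
  | _ i IH =>
    intro hi
    cases hj : π.just i with
    | ax C => exact ⟨i, ⟨hi, C, hj⟩, Relation.ReflTransGen.refl⟩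
    | res a b x =>
      have hs := π.step i hi
      rw [hj] at hs
      obtain ⟨ha, hb, -⟩ := hs
      obtain ⟨ℓ, hax, hpath⟩ := IH a ha (lt_trans ha hi)
      exact ⟨ℓ, hax, hpath.tail ⟨hi, a, b, x, hj, Or.inl rfl⟩⟩

lemma lit_origin : ∀ i, i < π.m → ∀ l ∈ (π.line i).C,
    ∃ ℓ C, ℓ < π.m ∧ π.just ℓ = Just.ax C ∧ C ∈ Q.matrix ∧
      l ∈ existSub Q C ∧ Reaches π ℓ i := by
  intro i
  induction i using Nat.strong_induction_on with
  | _ i IH =>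
    intro hi l hl
    cases hj : π.just i with
    | ax C =>
      have hs := π.step i hi
      rw [hj] at hs
      obtain ⟨hmem, hCeq, -⟩ := hs
      exact ⟨i, C, hi, hj, hmem, hCeq ▸ hl, Relation.ReflTransGen.refl⟩
    | res a b x =>
      have hs := π.step i hi
      rw [hj] at hs
      obtain ⟨ha, hb, hq, hpa, hpb, hCeq, -⟩ := hs
      rw [hCeq] at hl
      rcases Finset.mem_union.1 hl with hl' | hl'
      · obtain ⟨ℓ, C, h1, h2, h3, h4, h5⟩ :=
          IH a ha (lt_trans ha hi) l (Finset.mem_of_mem_erase hl')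
        exact ⟨ℓ, C, h1, h2, h3, h4, h5.tail ⟨hi, a, b, x, hj, Or.inl rfl⟩⟩
      · obtain ⟨ℓ, C, h1, h2, h3, h4, h5⟩ :=
          IH b hb (lt_trans hb hi) l (Finset.mem_of_mem_erase hl')
        exact ⟨ℓ, C, h1, h2, h3, h4, h5.tail ⟨hi, a, b, x, hj, Or.inr rfl⟩⟩

/-- If a literal is present at `i`, reaches `j`, but is absent at `j`, some
resolution on its variable occurs on the way. -/
lemma lit_removed {i j : ℕ} (hp : Reaches π i j) (l : Fin k × Bool) :
    l ∈ (π.line i).C → l ∉ (π.line j).C →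
    ∃ t a b, t < π.m ∧ π.just t = Just.res a b l.1 ∧ Reaches π i t ∧ Reaches π t j := by
  induction hp using Relation.ReflTransGen.head_induction_on with
  | refl => intro h1 h2; exact absurd h1 h2
  | head hedge hpath IH =>
    rename_i st md
    intro hmem hnot
    by_cases hc : l ∈ (π.line md).C
    · obtain ⟨t, a, b, h1, h2, h3, h4⟩ := IH hc hnot
      exact ⟨t, a, b, h1, h2, Relation.ReflTransGen.head hedge h3, h4⟩
    · obtain ⟨hm, a, b, x, hjust, hab⟩ := hedge
      have hs := π.step md hm
      rw [hjust] at hs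
      obtain ⟨ha, hb, hq, hpa, hpb, hCeq, -⟩ := hs
      have hlx : l.1 = x := by
        rcases hab with rfl | rfl
        · by_contra hne
          apply hc
          rw [hCeq]
          refine Finset.mem_union_left _ (Finset.mem_erase.2 ⟨?_, hmem⟩)
          intro heq; exact hne (congrArg Prod.fst heq)
        · by_contra hne
          apply hc
          rw [hCeq]
          refine Finset.mem_union_right _ (Finset.mem_erase.2 ⟨?_, hmem⟩)
          intro heq; exact hne (congrArg Prod.fst heq)
      exact ⟨md, a, b, hm, hlx ▸ hjust,
        Relation.ReflTransGen.single ⟨hm, a, b, x, hjust, hab⟩, hpath⟩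

end Graph

section Semantics

variable {n : ℕ}

/-- Update the value of `z`. -/
def updZ (α : Fin (kCR n) → Bool) (c : Bool) : Fin (kCR n) → Bool :=
  fun v => if v = zVar n then c else α v

lemma updZ_x (α : Fin (kCR n) → Bool) (c : Bool) (i j : Fin n) :
    updZ α c (xVar n i j) = α (xVar n i j) := if_neg (xVar_ne_zVar i j)

lemma updZ_z (α : Fin (kCR n) → Bool) (c : Bool) : updZ α c (zVar n) = c := if_pos rfl

lemma updZ_a (α : Fin (kCR n) → Bool) (c : Bool) (i : Fin n) :
    updZ α c (aVar n i) = α (aVar n i) := if_neg (fun h => (zVar_ne_aVar i) h.symm)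

lemma updZ_b (α : Fin (kCR n) → Bool) (c : Bool) (j : Fin n) :
    updZ α c (bVar n j) = α (bVar n j) := if_neg (fun h => (zVar_ne_bVar j) h.symm)

lemma xVar_lt_zVar (i j : Fin n) : xVar n i j < zVar n := by
  have := xVar_lt_sq n i j
  simpa [Fin.lt_def, xVar, zVar] using this

lemma zVar_lt_aVar (i : Fin n) : zVar n < aVar n i := by
  simp only [Fin.lt_def, zVar, aVar]
  omega

lemma zVar_lt_bVar (j : Fin n) : zVar n < bVar n j := by
  simp only [Fin.lt_def, zVar, bVar]
  omega

variable (π : Deriv (CRqbf n))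

/-- The soundness invariant: whenever `α` falsifies the clause of a line, any
defined value of its `z`-strategy (and both values, if undefined) falsifies a
matrix clause. -/
lemma INV (hn : 0 < n) : ∀ i, i < π.m → ∀ (α : Fin (kCR n) → Bool) (c : Bool),
    FalsifiesClause α (π.line i).C →
    ((π.line i).H (zVar n) α = some c ∨ (π.line i).H (zVar n) α = none) →
    ∃ C ∈ (CRqbf n).matrix, FalsifiesClause (updZ α c) C := by
  intro i
  induction i using Nat.strong_induction_on with
  | _ i IH =>
  intro hi α c hfals hval
  cases hj : π.just i with
  | ax C =>
    have hs := π.step i hi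
    rw [hj] at hs
    obtain ⟨hmem, hCeq, hH⟩ := hs
    have hHz := hH (zVar n) q_zVar
    rw [hCeq] at hfals
    rw [hHz] at hval
    refine ⟨C, hmem, ?_⟩
    rcases (mem_CRmatrix_iff C).1 hmem with ⟨i', j', rfl⟩ | ⟨i', j', rfl⟩ | rfl | rfl
    · have hc : c = false := by
        rcases hval with hval | hval
        · rw [axiomStrat_A] at hval
          exact (Option.some.injEq _ _ ▸ hval).symm
        · rw [axiomStrat_A] at hval; simp at hval
      subst hc
      intro l hl
      rcases (mem_Aclause_iff _ _ _).1 hl with rfl | rfl | rfl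
      · rw [updZ_x]
        exact hfals _ ((mem_existSub_A _ _ _).2 (Or.inl rfl))
      · rw [updZ_z]; rfl
      · rw [updZ_a]
        exact hfals _ ((mem_existSub_A _ _ _).2 (Or.inr rfl))
    · have hc : c = true := by
        rcases hval with hval | hval
        · rw [axiomStrat_B] at hval
          exact (Option.some.injEq _ _ ▸ hval).symm
        · rw [axiomStrat_B] at hval; simp at hval
      subst hc
      intro l hl
      rcases (mem_Bclause_iff _ _ _).1 hl with rfl | rfl | rfl
      · rw [updZ_x]
        exact hfals _ ((mem_existSub_B _ _ _).2 (Or.inl rfl))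
      · rw [updZ_z]; rfl
      · rw [updZ_b]
        exact hfals _ ((mem_existSub_B _ _ _).2 (Or.inr rfl))
    · intro l hl
      rcases (mem_LA_iff _).1 hl with ⟨i', rfl⟩
      rw [updZ_a]
      exact hfals _ (existSub_LA (n := n) ▸ hl)
    · intro l hl
      rcases (mem_LB_iff _).1 hl with ⟨j', rfl⟩
      rw [updZ_b]
      exact hfals _ (existSub_LB (n := n) ▸ hl)
  | res a b x =>
    have hs := π.step i hi
    rw [hj] at hs
    obtain ⟨ha, hb, hq, hpa, hpb, hCeq, hH⟩ := hs
    have hHz := hH (zVar n) q_zVar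
    have hfa : α x = false → FalsifiesClause α (π.line a).C := by
      intro hα l hl
      by_cases hlp : l = (x, true)
      · subst hlp; simpa using hα
      · exact hfals l (hCeq ▸ Finset.mem_union_left _ (Finset.mem_erase.2 ⟨hlp, hl⟩))
    have hfb : α x = true → FalsifiesClause α (π.line b).C := by
      intro hα l hl
      by_cases hlp : l = (x, false)
      · subst hlp; simpa using hα
      · exact hfals l (hCeq ▸ Finset.mem_union_right _ (Finset.mem_erase.2 ⟨hlp, hl⟩))
    rcases var_trichotomy hn x with ⟨ix, jx, rfl⟩ | rfl | ⟨ix, rfl⟩ | ⟨jx, rfl⟩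
    · -- pivot is an x-variable: if-else strategy
      have hIte := hHz.1 (xVar_lt_zVar ix jx)
      rw [hIte] at hval
      cases hα : α (xVar n ix jx)
      · apply IH a ha (lt_trans ha hi) α c (hfa hα)
        simpa [iteStrat, hα] using hval
      · apply IH b hb (lt_trans hb hi) α c (hfb hα)
        simpa [iteStrat, hα] using hval
    · rw [q_zVar] at hq; simp at hq
    · -- pivot aVar: union strategy
      obtain ⟨hcons, hUn⟩ := hHz.2 (zVar_lt_aVar ix)
      rw [hUn] at hval
      cases hα : α (aVar n ix)
      · apply IH a ha (lt_trans ha hi) α c (hfa hα)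
        cases hA : (π.line a).H (zVar n) α with
        | none => exact Or.inr rfl
        | some c' =>
          have hu : unionStrat ((π.line a).H (zVar n)) ((π.line b).H (zVar n)) α = some c' := by
            simp [unionStrat, hA]
          rcases hval with hval | hval
          · rw [hu] at hval
            exact Or.inl hval
          · rw [hu] at hval; simp at hval
      · apply IH b hb (lt_trans hb hi) α c (hfb hα)
        cases hA : (π.line a).H (zVar n) α with
        | none =>
          have hu : unionStrat ((π.line a).H (zVar n)) ((π.line b).H (zVar n)) α
              = (π.line b).H (zVar n) α := by
            simp [unionStrat, hA]
          rw [hu] at hval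
          exact hval
        | some c' =>
          have hu : unionStrat ((π.line a).H (zVar n)) ((π.line b).H (zVar n)) α = some c' := by
            simp [unionStrat, hA]
          rcases hval with hval | hval
          · rw [hu] at hval
            have hcc : c' = c := Option.some_inj.1 hval
            cases hB : (π.line b).H (zVar n) α with
            | none => exact Or.inr rfl
            | some c'' =>
              have := hcons α c' c'' hA hB
              exact Or.inl (by rw [← this, hcc])
          · rw [hu] at hval; simp at hval
    · -- pivot bVar: union strategy (identical argument)
      obtain ⟨hcons, hUn⟩ := hHz.2 (zVar_lt_bVar jx)
      rw [hUn] at hval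
      cases hα : α (bVar n jx)
      · apply IH a ha (lt_trans ha hi) α c (hfa hα)
        cases hA : (π.line a).H (zVar n) α with
        | none => exact Or.inr rfl
        | some c' =>
          have hu : unionStrat ((π.line a).H (zVar n)) ((π.line b).H (zVar n)) α = some c' := by
            simp [unionStrat, hA]
          rcases hval with hval | hval
          · rw [hu] at hval
            exact Or.inl hval
          · rw [hu] at hval; simp at hval
      · apply IH b hb (lt_trans hb hi) α c (hfb hα)
        cases hA : (π.line a).H (zVar n) α with
        | none =>
          have hu : unionStrat ((π.line a).H (zVar n)) ((π.line b).H (zVar n)) α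
              = (π.line b).H (zVar n) α := by
            simp [unionStrat, hA]
          rw [hu] at hval
          exact hval
        | some c' =>
          have hu : unionStrat ((π.line a).H (zVar n)) ((π.line b).H (zVar n)) α = some c' := by
            simp [unionStrat, hA]
          rcases hval with hval | hval
          · rw [hu] at hval
            have hcc : c' = c := Option.some_inj.1 hval
            cases hB : (π.line b).H (zVar n) α with
            | none => exact Or.inr rfl
            | some c'' =>
              have := hcons α c' c'' hA hB
              exact Or.inl (by rw [← this, hcc])
          · rw [hu] at hval; simp at hval

end Semantics

section Builder

variable {n : ℕ}

/-- Build an assignment from its x/z/a/b parts. -/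
def mkA (hn : 0 < n) (X : Fin n → Fin n → Bool) (Z : Bool) (A B : Fin n → Bool) :
    Fin (kCR n) → Bool :=
  fun v =>
    if h : v.val < n * n then
      X ⟨v.val / n, by rw [Nat.div_lt_iff_lt_mul hn]; exact h⟩ ⟨v.val % n, Nat.mod_lt _ hn⟩
    else if v.val = n * n then Z
    else if h2 : v.val < n * n + 1 + n then
      A ⟨v.val - (n * n + 1), by
        have := v.isLt; simp only [kCR] at this; omega⟩
    else
      B ⟨v.val - (n * n + 1 + n), by
        have := v.isLt; simp only [kCR] at this; omega⟩

lemma mkA_x (hn : 0 < n) (X : Fin n → Fin n → Bool) (Z : Bool) (A B : Fin n → Bool)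
    (i j : Fin n) : mkA hn X Z A B (xVar n i j) = X i j := by
  have hlt := xVar_lt_sq n i j
  simp only [mkA, xVar]
  simp only [hlt, ↓reduceDIte]
  congr 1
  · apply Fin.ext
    show (i.val * n + j.val) / n = i.val
    rw [mul_comm, Nat.mul_add_div hn, Nat.div_eq_of_lt j.isLt, add_zero]
  · apply Fin.ext
    show (i.val * n + j.val) % n = j.val
    rw [mul_comm, Nat.mul_add_mod, Nat.mod_eq_of_lt j.isLt]

lemma mkA_z (hn : 0 < n) (X : Fin n → Fin n → Bool) (Z : Bool) (A B : Fin n → Bool) :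
    mkA hn X Z A B (zVar n) = Z := by
  simp only [mkA, zVar]
  rw [dif_neg (by omega)]
  simp

lemma mkA_a (hn : 0 < n) (X : Fin n → Fin n → Bool) (Z : Bool) (A B : Fin n → Bool)
    (i : Fin n) : mkA hn X Z A B (aVar n i) = A i := by
  have := i.isLt
  simp only [mkA, aVar]
  have h1 : ¬ (n * n + 1 + i.val < n * n) := by omega
  have h2 : n * n + 1 + i.val ≠ n * n := by omega
  have h3 : n * n + 1 + i.val < n * n + 1 + n := by omega
  simp only [h1, h2, h3, ↓reduceDIte, ↓reduceIte]
  congr 1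
  apply Fin.ext
  show n * n + 1 + i.val - (n * n + 1) = i.val
  omega

lemma mkA_b (hn : 0 < n) (X : Fin n → Fin n → Bool) (Z : Bool) (A B : Fin n → Bool)
    (j : Fin n) : mkA hn X Z A B (bVar n j) = B j := by
  have := j.isLt
  simp only [mkA, bVar]
  have h1 : ¬ (n * n + 1 + n + j.val < n * n) := by omega
  have h2 : n * n + 1 + n + j.val ≠ n * n := by omega
  have h3 : ¬ (n * n + 1 + n + j.val < n * n + 1 + n) := by omega
  simp only [h1, h2, h3, ↓reduceDIte, ↓reduceIte]
  congr 1
  apply Fin.ext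
  show n * n + 1 + n + j.val - (n * n + 1 + n) = j.val
  omega

/-- If no matrix clause is falsified with `z := false`, regardless of the rest. -/
lemma no_fals_zfalse (α : Fin (kCR n) → Bool)
    (h1 : ∀ i j, α (xVar n i j) = true ∨ α (aVar n i) = true)
    (h2 : ∃ i, α (aVar n i) = false)
    (h3 : ∃ j, α (bVar n j) = false) :
    ∀ C ∈ (CRqbf n).matrix, ¬ FalsifiesClause (updZ α false) C := by
  intro C hC hf
  rcases (mem_CRmatrix_iff C).1 hC with ⟨i, j, rfl⟩ | ⟨i, j, rfl⟩ | rfl | rfl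
  · rcases h1 i j with h | h
    · have := hf _ ((mem_Aclause_iff i j _).2 (Or.inl rfl))
      rw [updZ_x] at this
      simp [h] at this
    · have := hf _ ((mem_Aclause_iff i j _).2 (Or.inr (Or.inr rfl)))
      rw [updZ_a] at this
      simp [h] at this
  · have := hf _ ((mem_Bclause_iff i j _).2 (Or.inr (Or.inl rfl)))
    rw [updZ_z] at this
    simp at this
  · obtain ⟨i, hi⟩ := h2
    have := hf _ ((mem_LA_iff _).2 ⟨i, rfl⟩)
    rw [updZ_a] at this
    simp [hi] at this
  · obtain ⟨j, hj⟩ := h3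
    have := hf _ ((mem_LB_iff _).2 ⟨j, rfl⟩)
    rw [updZ_b] at this
    simp [hj] at this

/-- If no matrix clause is falsified with `z := true`, regardless of the rest. -/
lemma no_fals_ztrue (α : Fin (kCR n) → Bool)
    (h1 : ∀ i j, α (xVar n i j) = false ∨ α (bVar n j) = true)
    (h2 : ∃ j, α (bVar n j) = false)
    (h3 : ∃ i, α (aVar n i) = false) :
    ∀ C ∈ (CRqbf n).matrix, ¬ FalsifiesClause (updZ α true) C := by
  intro C hC hf
  rcases (mem_CRmatrix_iff C).1 hC with ⟨i, j, rfl⟩ | ⟨i, j, rfl⟩ | rfl | rfl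
  · have := hf _ ((mem_Aclause_iff i j _).2 (Or.inr (Or.inl rfl)))
    rw [updZ_z] at this
    simp at this
  · rcases h1 i j with h | h
    · have := hf _ ((mem_Bclause_iff i j _).2 (Or.inl rfl))
      rw [updZ_x] at this
      simp [h] at this
    · have := hf _ ((mem_Bclause_iff i j _).2 (Or.inr (Or.inr rfl)))
      rw [updZ_b] at this
      simp [h] at this
  · obtain ⟨i, hi⟩ := h3
    have := hf _ ((mem_LA_iff _).2 ⟨i, rfl⟩)
    rw [updZ_a] at this
    simp [hi] at this
  · obtain ⟨j, hj⟩ := h2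
    have := hf _ ((mem_LB_iff _).2 ⟨j, rfl⟩)
    rw [updZ_b] at this
    simp [hj] at this

variable (π : Deriv (CRqbf n))

/-- Forced value `true`. -/
lemma force_true (hn : 0 < n) {i : ℕ} (hi : i < π.m) (α : Fin (kCR n) → Bool)
    (hfals : FalsifiesClause α (π.line i).C)
    (hsafe : ∀ C ∈ (CRqbf n).matrix, ¬ FalsifiesClause (updZ α false) C) :
    (π.line i).H (zVar n) α = some true := by
  rcases h : (π.line i).H (zVar n) α with _ | c
  · obtain ⟨C, hC, hf⟩ := INV π hn i hi α false hfals (Or.inr h)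
    exact absurd hf (hsafe C hC)
  · cases c with
    | false =>
      obtain ⟨C, hC, hf⟩ := INV π hn i hi α false hfals (Or.inl h)
      exact absurd hf (hsafe C hC)
    | true => rfl

/-- Forced value `false`. -/
lemma force_false (hn : 0 < n) {i : ℕ} (hi : i < π.m) (α : Fin (kCR n) → Bool)
    (hfals : FalsifiesClause α (π.line i).C)
    (hsafe : ∀ C ∈ (CRqbf n).matrix, ¬ FalsifiesClause (updZ α true) C) :
    (π.line i).H (zVar n) α = some false := by
  rcases h : (π.line i).H (zVar n) α with _ | c
  · obtain ⟨C, hC, hf⟩ := INV π hn i hi α true hfals (Or.inr h)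
    exact absurd hf (hsafe C hC)
  · cases c with
    | true =>
      obtain ⟨C, hC, hf⟩ := INV π hn i hi α true hfals (Or.inl h)
      exact absurd hf (hsafe C hC)
    | false => rfl

end Builder

section StratEval

variable {k : ℕ}

lemma unionStrat_some (f g : Strategy k) (α : Fin k → Bool) (c : Bool) (h : f α = some c) :
    unionStrat f g α = some c := by simp [unionStrat, h]

lemma unionStrat_none (f g : Strategy k) (α : Fin k → Bool) (h : f α = none) :
    unionStrat f g α = g α := by simp [unionStrat, h]

lemma iteStrat_pos (x : Fin k) (f g : Strategy k) (α : Fin k → Bool) (h : α x = true) :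
    iteStrat x f g α = f α := by simp [iteStrat, h]

lemma iteStrat_neg (x : Fin k) (f g : Strategy k) (α : Fin k → Bool) (h : α x = false) :
    iteStrat x f g α = g α := by simp [iteStrat, h]

end StratEval

section Rowcol

variable {n : ℕ}

lemma xVar_div (i j : Fin n) : (xVar n i j).val / n = i.val := by
  have hn : 0 < n := i.pos
  show (i.val * n + j.val) / n = i.val
  rw [mul_comm, Nat.mul_add_div hn, Nat.div_eq_of_lt j.isLt, add_zero]

lemma xVar_mod (i j : Fin n) : (xVar n i j).val % n = j.val := by
  show (i.val * n + j.val) % n = j.val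
  rw [mul_comm, Nat.mul_add_mod, Nat.mod_eq_of_lt j.isLt]

end Rowcol

section LeafA

/-- **Key lemma, case A.** A line with pivot `a_{i₀}` whose clause is on
x-variables only, reachable to the final line, has at least `n-1` literals. -/
lemma leafA {n : ℕ} (π : Deriv (CRqbf n)) (hreg : SRegular π (ABSet n))
    (s a b : ℕ) (i₀ : Fin n)
    (hs : s < π.m) (hsr : Reaches π s (π.m - 1))
    (hj : π.just s = Just.res a b (aVar n i₀))
    (hX : ∀ l ∈ (π.line s).C, ∃ i' j' : Fin n, l.1 = xVar n i' j') :
    n - 1 ≤ (π.line s).C.card := by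
  classical
  have hn : 0 < n := i₀.pos
  have hstep := π.step s hs
  rw [hj] at hstep
  obtain ⟨ha, hb, hq, hpa, hpb, hCeq, hH⟩ := hstep
  have ham : a < π.m := lt_trans ha hs
  have hCa_sub : ∀ l ∈ (π.line a).C, l ≠ (aVar n i₀, true) → l ∈ (π.line s).C := by
    intro l hl hne
    rw [hCeq]
    exact Finset.mem_union_left _ (Finset.mem_erase.2 ⟨hne, hl⟩)
  have hnotin : ∀ (v : Fin (kCR n)) (p : Bool), (∀ i' j' : Fin n, v ≠ xVar n i' j') →
      (v, p) ∉ (π.line s).C := by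
    intro v p hv hmem
    obtain ⟨i', j', hveq⟩ := hX _ hmem
    exact hv i' j' hveq
  -- A1 : regularity: no other resolution on `a_{i₀}` below the positive parent
  have A1 : ∀ t a' b', Reaches π t a → π.just t = Just.res a' b' (aVar n i₀) → False := by
    intro t a' b' hta hjt
    have htm : t < π.m := lt_of_le_of_lt (reaches_le π hta) ham
    obtain ⟨ℓ, hax, hpath⟩ := exists_axiom_ancestor π t htm
    refine hreg ⟨t, s, ℓ, a', b', a, b, aVar n i₀, ?_, Or.inl ⟨i₀, rfl⟩, hjt, hj, hax, hpath,
      hta.tail ⟨hs, a, b, aVar n i₀, hj, Or.inl rfl⟩, hsr⟩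
    have := reaches_le π hta
    omega
  -- A2 : no download of LA below the positive parent
  have A2 : ∀ t, Reaches π t a → π.just t ≠ Just.ax (LAclause n) := by
    intro t hta hjt
    have htm : t < π.m := lt_of_le_of_lt (reaches_le π hta) ham
    have hst := π.step t htm
    rw [hjt] at hst
    obtain ⟨hmem, hCeq', -⟩ := hst
    have hlit : (aVar n i₀, false) ∈ (π.line t).C := by
      rw [hCeq', existSub_LA]
      exact (mem_LA_iff _).2 ⟨i₀, rfl⟩
    have hnot : (aVar n i₀, false) ∉ (π.line a).C := by
      intro hmem'
      exact hnotin _ _ (fun i' j' h => (xVar_ne_aVar i' j' i₀) h.symm)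
        (hCa_sub _ hmem' (by simp))
    obtain ⟨t', a', b', -, hjt', -, ht'a⟩ := lit_removed π hta _ hlit hnot
    exact A1 t' a' b' ht'a hjt'
  -- A3 : no negative a-literal anywhere below the positive parent
  have A3 : ∀ ℓ (i' : Fin n), Reaches π ℓ a → (aVar n i', false) ∉ (π.line ℓ).C := by
    intro ℓ i' hℓa hmem
    have hℓm : ℓ < π.m := lt_of_le_of_lt (reaches_le π hℓa) ham
    obtain ⟨ℓ₀, C, h1, h2, h3, h4, h5⟩ := lit_origin π ℓ hℓm _ hmem
    have hC : C = LAclause n := loc_aFalse h3 ((mem_existSub_iff _ _).1 h4).1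
    exact A2 ℓ₀ (h5.trans hℓa) (hC ▸ h2)
  -- A4 : no positive a-literal for a different row
  have A4 : ∀ ℓ (i' : Fin n), i' ≠ i₀ → Reaches π ℓ a → (aVar n i', true) ∉ (π.line ℓ).C := by
    intro ℓ i' hne hℓa hmem
    have hnot : (aVar n i', true) ∉ (π.line a).C := by
      intro hmem'
      refine hnotin _ _ (fun i'' j'' h => (xVar_ne_aVar i'' j'' i') h.symm)
        (hCa_sub _ hmem' ?_)
      intro h
      exact hne (aVar_inj (congrArg Prod.fst h))
    obtain ⟨t', a', b', ht'm, hjt', -, ht'a⟩ := lit_removed π hℓa _ hmem hnot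
    have hst' := π.step t' ht'm
    rw [hjt'] at hst'
    obtain ⟨ha', hb', -, -, hpb', -⟩ := hst'
    exact A3 b' i'
      ((Relation.ReflTransGen.single ⟨ht'm, a', b', _, hjt', Or.inr rfl⟩).trans ht'a) hpb'
  -- A6 : no download of an A-clause of a different row
  have A6 : ∀ ℓ (i' j' : Fin n), i' ≠ i₀ → Reaches π ℓ a →
      π.just ℓ ≠ Just.ax (Aclause n i' j') := by
    intro ℓ i' j' hne hℓa hjt
    have hℓm : ℓ < π.m := lt_of_le_of_lt (reaches_le π hℓa) ham
    have hst := π.step ℓ hℓm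
    rw [hjt] at hst
    obtain ⟨-, hCeq', -⟩ := hst
    have : (aVar n i', true) ∈ (π.line ℓ).C := by
      rw [hCeq']
      exact (mem_existSub_A _ _ _).2 (Or.inr rfl)
    exact A4 ℓ i' hne hℓa this
  -- Apos : no positive x-literal of a different row
  have Apos : ∀ ℓ (i' j' : Fin n), i' ≠ i₀ → Reaches π ℓ a →
      (xVar n i' j', true) ∉ (π.line ℓ).C := by
    intro ℓ i' j' hne hℓa hmem
    have hℓm : ℓ < π.m := lt_of_le_of_lt (reaches_le π hℓa) ham
    obtain ⟨ℓ₀, C, h1, h2, h3, h4, h5⟩ := lit_origin π ℓ hℓm _ hmem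
    have hC : C = Aclause n i' j' := loc_xTrue h3 ((mem_existSub_iff _ _).1 h4).1
    exact A6 ℓ₀ i' j' hne (h5.trans hℓa) (hC ▸ h2)
  -- A7 : a clause containing a positive row-i₀ literal is the A-axiom itself
  have A7 : ∀ ℓ, Reaches π ℓ a → ∀ (j' : Fin n), (xVar n i₀ j', true) ∈ (π.line ℓ).C →
      π.just ℓ = Just.ax (Aclause n i₀ j') := by
    intro ℓ
    induction ℓ using Nat.strong_induction_on with
    | _ ℓ IH =>
    intro hℓa j' hmem
    have hℓm : ℓ < π.m := lt_of_le_of_lt (reaches_le π hℓa) ham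
    cases hjℓ : π.just ℓ with
    | ax C =>
      have hst := π.step ℓ hℓm
      rw [hjℓ] at hst
      obtain ⟨h3, hCeq', -⟩ := hst
      rw [hCeq'] at hmem
      rw [loc_xTrue h3 ((mem_existSub_iff _ _).1 hmem).1]
    | res a' b' x' =>
      exfalso
      have hst := π.step ℓ hℓm
      rw [hjℓ] at hst
      obtain ⟨ha', hb', hq', hpa', hpb', hCeq', -⟩ := hst
      have hra : Reaches π a' a :=
        (Relation.ReflTransGen.single ⟨hℓm, a', b', x', hjℓ, Or.inl rfl⟩).trans hℓa
      have hrb : Reaches π b' a :=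
        (Relation.ReflTransGen.single ⟨hℓm, a', b', x', hjℓ, Or.inr rfl⟩).trans hℓa
      rw [hCeq'] at hmem
      rcases Finset.mem_union.1 hmem with hm | hm
      · obtain ⟨hne, hm'⟩ := Finset.mem_erase.1 hm
        have hax := IH a' ha' hra j' hm'
        have hst2 := π.step a' (lt_of_le_of_lt (reaches_le π hra) ham)
        rw [hax] at hst2
        obtain ⟨-, hCeq2, -⟩ := hst2
        rw [hCeq2] at hpa'
        rcases (mem_existSub_A _ _ _).1 hpa' with h | h
        · exact hne h.symm
        · have hx : x' = aVar n i₀ := congrArg Prod.fst h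
          exact A1 ℓ a' b' hℓa (hx ▸ hjℓ)
      · obtain ⟨hne, hm'⟩ := Finset.mem_erase.1 hm
        have hax := IH b' hb' hrb j' hm'
        have hst2 := π.step b' (lt_of_le_of_lt (reaches_le π hrb) ham)
        rw [hax] at hst2
        obtain ⟨-, hCeq2, -⟩ := hst2
        rw [hCeq2] at hpb'
        rcases (mem_existSub_A _ _ _).1 hpb' with h | h
        · exact absurd (congrArg Prod.snd h) (by simp)
        · exact absurd (congrArg Prod.snd h) (by simp)
  -- classification of resolutions below the positive parent
  have classify : ∀ ℓ a' b' (x' : Fin (kCR n)), Reaches π ℓ a → π.just ℓ = Just.res a' b' x' →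
      (∃ j' : Fin n, x' = xVar n i₀ j' ∧ π.just a' = Just.ax (Aclause n i₀ j')) ∨
      (∃ j' : Fin n, x' = bVar n j') := by
    intro ℓ a' b' x' hℓa hjℓ
    have hℓm : ℓ < π.m := lt_of_le_of_lt (reaches_le π hℓa) ham
    have hst := π.step ℓ hℓm
    rw [hjℓ] at hst
    obtain ⟨ha', hb', hq', hpa', hpb', -, -⟩ := hst
    have hra : Reaches π a' a :=
      (Relation.ReflTransGen.single ⟨hℓm, a', b', x', hjℓ, Or.inl rfl⟩).trans hℓa
    have hrb : Reaches π b' a :=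
      (Relation.ReflTransGen.single ⟨hℓm, a', b', x', hjℓ, Or.inr rfl⟩).trans hℓa
    rcases var_trichotomy hn x' with ⟨ix, jx, rfl⟩ | rfl | ⟨ix, rfl⟩ | ⟨jx, rfl⟩
    · by_cases hi : ix = i₀
      · subst hi
        exact Or.inl ⟨jx, rfl, A7 a' hra jx hpa'⟩
      · exact absurd hpa' (Apos a' ix jx hi hra)
    · rw [q_zVar] at hq'; simp at hq'
    · exfalso
      by_cases hi : ix = i₀
      · exact A1 ℓ a' b' hℓa (hi ▸ hjℓ)
      · exact A3 b' ix hrb hpb'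
    · exact Or.inr ⟨jx, rfl⟩
  -- A9 : locality in row i₀
  have A9 : ∀ ℓ, Reaches π ℓ a → ∀ α α' : Fin (kCR n) → Bool,
      (∀ j' : Fin n, α (xVar n i₀ j') = α' (xVar n i₀ j')) →
      (π.line ℓ).H (zVar n) α = (π.line ℓ).H (zVar n) α' := by
    intro ℓ
    induction ℓ using Nat.strong_induction_on with
    | _ ℓ IH =>
    intro hℓa α α' hagree
    have hℓm : ℓ < π.m := lt_of_le_of_lt (reaches_le π hℓa) ham
    cases hjℓ : π.just ℓ with
    | ax C =>
      have hst := π.step ℓ hℓm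
      rw [hjℓ] at hst
      obtain ⟨-, -, hHax⟩ := hst
      rw [hHax (zVar n) q_zVar]
      rfl
    | res a' b' x' =>
      have hst := π.step ℓ hℓm
      rw [hjℓ] at hst
      obtain ⟨ha', hb', hq', hpa', hpb', -, hH'⟩ := hst
      have hra : Reaches π a' a :=
        (Relation.ReflTransGen.single ⟨hℓm, a', b', x', hjℓ, Or.inl rfl⟩).trans hℓa
      have hrb : Reaches π b' a :=
        (Relation.ReflTransGen.single ⟨hℓm, a', b', x', hjℓ, Or.inr rfl⟩).trans hℓa
      rcases classify ℓ a' b' x' hℓa hjℓ with ⟨j', rfl, -⟩ | ⟨j', rfl⟩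
      · rw [(hH' (zVar n) q_zVar).1 (xVar_lt_zVar i₀ j')]
        cases hc : α (xVar n i₀ j') with
        | true =>
          rw [iteStrat_pos _ _ _ _ hc, iteStrat_pos _ _ _ _ ((hagree j') ▸ hc)]
          exact IH b' hb' hrb α α' hagree
        | false =>
          rw [iteStrat_neg _ _ _ _ hc, iteStrat_neg _ _ _ _ ((hagree j') ▸ hc)]
          exact IH a' ha' hra α α' hagree
      · rw [((hH' (zVar n) q_zVar).2 (zVar_lt_bVar j')).2]
        cases hA : (π.line a').H (zVar n) α with
        | none =>
          rw [unionStrat_none _ _ _ hA,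
            unionStrat_none _ _ _ ((IH a' ha' hra α α' hagree).symm.trans hA)]
          exact IH b' hb' hrb α α' hagree
        | some c =>
          rw [unionStrat_some _ _ _ _ hA,
            unionStrat_some _ _ _ _ ((IH a' ha' hra α α' hagree).symm.trans hA)]
  -- A10 : monotonicity in row i₀ away from `false`
  have A10 : ∀ ℓ, Reaches π ℓ a → ∀ α α' : Fin (kCR n) → Bool,
      (∀ j' : Fin n, α (xVar n i₀ j') = true → α' (xVar n i₀ j') = true) →
      (π.line ℓ).H (zVar n) α ≠ some false →
      (π.line ℓ).H (zVar n) α = (π.line ℓ).H (zVar n) α' := by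
    intro ℓ
    induction ℓ using Nat.strong_induction_on with
    | _ ℓ IH =>
    intro hℓa α α' hmono hnf
    have hℓm : ℓ < π.m := lt_of_le_of_lt (reaches_le π hℓa) ham
    cases hjℓ : π.just ℓ with
    | ax C =>
      have hst := π.step ℓ hℓm
      rw [hjℓ] at hst
      obtain ⟨-, -, hHax⟩ := hst
      rw [hHax (zVar n) q_zVar]
      rfl
    | res a' b' x' =>
      have hst := π.step ℓ hℓm
      rw [hjℓ] at hst
      obtain ⟨ha', hb', hq', hpa', hpb', -, hH'⟩ := hst
      have hra : Reaches π a' a :=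
        (Relation.ReflTransGen.single ⟨hℓm, a', b', x', hjℓ, Or.inl rfl⟩).trans hℓa
      have hrb : Reaches π b' a :=
        (Relation.ReflTransGen.single ⟨hℓm, a', b', x', hjℓ, Or.inr rfl⟩).trans hℓa
      rcases classify ℓ a' b' x' hℓa hjℓ with ⟨j', rfl, hax⟩ | ⟨j', rfl⟩
      · have hHeq := (hH' (zVar n) q_zVar).1 (xVar_lt_zVar i₀ j')
        have hst2 := π.step a' (lt_of_le_of_lt (reaches_le π hra) ham)
        rw [hax] at hst2
        obtain ⟨-, -, hHax2⟩ := hst2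
        have hA'z := hHax2 (zVar n) q_zVar
        cases hc : α (xVar n i₀ j') with
        | false =>
          exfalso
          apply hnf
          rw [hHeq, iteStrat_neg _ _ _ _ hc, hA'z]
          exact axiomStrat_A i₀ j' α
        | true =>
          rw [hHeq, iteStrat_pos _ _ _ _ hc, iteStrat_pos _ _ _ _ (hmono j' hc)]
          apply IH b' hb' hrb α α' hmono
          rw [← iteStrat_pos (xVar n i₀ j') ((π.line b').H (zVar n)) ((π.line a').H (zVar n)) α hc,
            ← hHeq]
          exact hnf
      · have hHeq := ((hH' (zVar n) q_zVar).2 (zVar_lt_bVar j')).2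
        cases hA : (π.line a').H (zVar n) α with
        | none =>
          have heq := IH a' ha' hra α α' hmono (by rw [hA]; simp)
          rw [hHeq, unionStrat_none _ _ _ hA, unionStrat_none _ _ _ (heq.symm.trans hA)]
          apply IH b' hb' hrb α α' hmono
          rw [← unionStrat_none ((π.line a').H (zVar n)) ((π.line b').H (zVar n)) α hA, ← hHeq]
          exact hnf
        | some c =>
          have hnf' : c ≠ false := by
            intro h
            subst h
            exact hnf (by rw [hHeq]; exact unionStrat_some _ _ _ _ hA)
          have heq := IH a' ha' hra α α' hmono (by rw [hA]; intro h; exact hnf' (Option.some_inj.1 h))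
          rw [hHeq, unionStrat_some _ _ _ _ hA, unionStrat_some _ _ _ _ (heq.symm.trans hA)]
  -- === final contradiction ===
  by_contra hcard
  push_neg at hcard
  -- an untouched row (different from i₀) and an untouched column
  set T : Finset ℕ := (π.line s).C.image (fun l => l.1.val / n) with hT
  have hTcard : T.card ≤ (π.line s).C.card := Finset.card_image_le
  have hrow : ∃ istar : Fin n, istar.val ∉ T ∧ istar ≠ i₀ := by
    by_contra h
    push_neg at h
    have hsub : (Finset.univ : Finset (Fin n)).image Fin.val ⊆ T ∪ {i₀.val} := by
      intro v hv
      obtain ⟨i, -, rfl⟩ := Finset.mem_image.1 hv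
      by_cases hvT : i.val ∈ T
      · exact Finset.mem_union_left _ hvT
      · rw [h i hvT]
        exact Finset.mem_union_right _ (Finset.mem_singleton_self _)
    have h1 : n ≤ (T ∪ {i₀.val}).card := by
      have hv : ((Finset.univ : Finset (Fin n)).image Fin.val).card = n := by
        rw [Finset.card_image_of_injective _ Fin.val_injective, Finset.card_univ,
          Fintype.card_fin]
      have hle := Finset.card_le_card hsub
      omega
    have h2 : (T ∪ {i₀.val}).card ≤ T.card + 1 :=
      le_trans (Finset.card_union_le _ _) (by simp)
    omega
  obtain ⟨istar, hisT, hisne⟩ := hrow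
  set U : Finset ℕ := (π.line s).C.image (fun l => l.1.val % n) with hU
  have hUcard : U.card ≤ (π.line s).C.card := Finset.card_image_le
  have hcol : ∃ jstar : Fin n, jstar.val ∉ U := by
    by_contra h
    push_neg at h
    have hsub : (Finset.univ : Finset (Fin n)).image Fin.val ⊆ U := by
      intro v hv
      obtain ⟨i, -, rfl⟩ := Finset.mem_image.1 hv
      exact h i
    have h1 : n ≤ U.card := by
      have hv : ((Finset.univ : Finset (Fin n)).image Fin.val).card = n := by
        rw [Finset.card_image_of_injective _ Fin.val_injective, Finset.card_univ,
          Fintype.card_fin]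
      have hle := Finset.card_le_card hsub
      omega
    omega
  obtain ⟨jstar, hjsU⟩ := hcol
  have hrowfree : ∀ (j' : Fin n) (p : Bool), (xVar n istar j', p) ∉ (π.line s).C := by
    intro j' p hmem
    exact hisT (hT ▸ Finset.mem_image.2 ⟨_, hmem, xVar_div istar j'⟩)
  have hcolfree : ∀ (i' : Fin n) (p : Bool), (xVar n i' jstar, p) ∉ (π.line s).C := by
    intro i' p hmem
    exact hjsU (hU ▸ Finset.mem_image.2 ⟨_, hmem, xVar_mod i' jstar⟩)
  -- base x-assignment ξ
  set ξ : Fin n → Fin n → Bool :=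
    fun i j => decide ((xVar n i j, false) ∈ (π.line s).C) with hξ
  have hIsC := (π.lineOK s hs).1
  have hξT : ∀ i' j' : Fin n, (xVar n i' j', false) ∈ (π.line s).C → ξ i' j' = true := by
    intro i' j' hmem
    simp only [hξ, decide_eq_true_eq]
    exact hmem
  have hξF : ∀ i' j' : Fin n, (xVar n i' j', true) ∈ (π.line s).C → ξ i' j' = false := by
    intro i' j' hmem
    simp only [hξ, decide_eq_false_iff_not]
    intro hmem'
    exact hIsC _ ⟨hmem, hmem'⟩
  have hfalsC : ∀ (X : Fin n → Fin n → Bool),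
      (∀ i' j' : Fin n, X i' j' = ξ i' j' ∨ (∀ p, (xVar n i' j', p) ∉ (π.line s).C)) →
      ∀ Z A B, FalsifiesClause (mkA hn X Z A B) (π.line s).C := by
    intro X hXp Z A B l hl
    obtain ⟨v, p⟩ := l
    obtain ⟨i', j', hv⟩ := hX _ hl
    have hv' : v = xVar n i' j' := hv
    subst hv'
    rcases hXp i' j' with hXv | hfree
    · show mkA hn X Z A B (xVar n i' j') = !p
      rw [mkA_x]
      cases p with
      | false =>
        rw [hXv]
        simpa using hξT i' j' hl
      | true =>
        rw [hXv]
        simpa using hξF i' j' hl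
    · exact absurd hl (hfree p)
  -- two assignments with equal row i₀
  set X₁ : Fin n → Fin n → Bool := fun i j => if i = istar then true else ξ i j with hX₁
  set A₁ : Fin n → Bool := fun i => if i = istar then false else true with hA₁
  set α₁ : Fin (kCR n) → Bool := mkA hn X₁ false A₁ (fun _ => false) with hα₁
  set Bc : Fin n → Bool := fun j => decide (∃ i', ξ i' j = true) with hBc
  set α₂ : Fin (kCR n) → Bool := mkA hn ξ false (fun _ => false) Bc with hα₂
  have hfals₁ : FalsifiesClause α₁ (π.line s).C := by
    rw [hα₁]
    apply hfalsC
    intro i' j'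
    by_cases hi : i' = istar
    · subst hi
      exact Or.inr (fun p => hrowfree j' p)
    · left
      simp only [hX₁, if_neg hi]
  have hfals₂ : FalsifiesClause α₂ (π.line s).C := by
    rw [hα₂]
    apply hfalsC
    intro i' j'
    exact Or.inl rfl
  have h₁ : (π.line s).H (zVar n) α₁ = some true := by
    apply force_true π hn hs α₁ hfals₁
    apply no_fals_zfalse
    · intro i j
      by_cases hi : i = istar
      · left
        simp only [hα₁, mkA_x, hX₁, if_pos hi]
      · right
        simp only [hα₁, mkA_a, hA₁, if_neg hi]
    · exact ⟨istar, by simp [hα₁, mkA_a, hA₁]⟩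
    · exact ⟨⟨0, hn⟩, by simp only [hα₁, mkA_b]⟩
  have h₂ : (π.line s).H (zVar n) α₂ = some false := by
    apply force_false π hn hs α₂ hfals₂
    apply no_fals_ztrue
    · intro i j
      by_cases hij : ξ i j = true
      · right
        simp only [hα₂, mkA_b, hBc, decide_eq_true_eq]
        exact ⟨i, hij⟩
      · left
        simp only [hα₂, mkA_x]
        simpa using hij
    · refine ⟨jstar, ?_⟩
      simp only [hα₂, mkA_b, hBc, decide_eq_false_iff_not]
      rintro ⟨i', hi'⟩
      simp only [hξ, decide_eq_true_eq] at hi'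
      exact hcolfree i' false hi'
    · exact ⟨⟨0, hn⟩, by simp only [hα₂, mkA_a]⟩
  have hHs := ((hH (zVar n) q_zVar).2 (zVar_lt_aVar i₀)).2
  cases hja : π.just a with
  | ax C =>
    have hst2 := π.step a ham
    rw [hja] at hst2
    obtain ⟨hCm, hCeq2, hHax⟩ := hst2
    have hmemA : (aVar n i₀, true) ∈ existSub (CRqbf n) C := hCeq2 ▸ hpa
    obtain ⟨jj, rfl⟩ := loc_aTrue hCm ((mem_existSub_iff _ _).1 hmemA).1
    have hsf : (π.line s).H (zVar n) α₁ = some false := by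
      rw [hHs]
      apply unionStrat_some
      rw [hHax (zVar n) q_zVar]
      exact axiomStrat_A i₀ jj α₁
    rw [hsf] at h₁
    simp at h₁
  | res a2 b2 x2 =>
    set abar : Fin (kCR n) → Bool :=
      mkA hn (fun _ _ => true) false (fun i => if i = i₀ then false else true)
        (fun _ => false) with habar
    have hfalsa : FalsifiesClause abar (π.line a).C := by
      intro l hl
      obtain ⟨v, p⟩ := l
      by_cases hvp : (v, p) = (aVar n i₀, true)
      · have hv := congrArg Prod.fst hvp
        have hp := congrArg Prod.snd hvp
        simp only at hv hp
        subst hv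
        subst hp
        show abar (aVar n i₀) = !true
        simp [habar, mkA_a]
      · have hls := hCa_sub _ hl hvp
        obtain ⟨i', j', hv⟩ := hX _ hls
        have hv' : v = xVar n i' j' := hv
        subst hv'
        cases p with
        | true =>
          exfalso
          by_cases hi : i' = i₀
          · subst hi
            have hax := A7 a Relation.ReflTransGen.refl j' hl
            rw [hja] at hax
            cases hax
          · exact Apos a i' j' hi Relation.ReflTransGen.refl hl
        | false =>
          show abar (xVar n i' j') = !false
          simp only [habar, mkA_x, Bool.not_false]
    have hforce : (π.line a).H (zVar n) abar = some true := by
      apply force_true π hn ham abar hfalsa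
      apply no_fals_zfalse
      · intro i j
        left
        simp only [habar, mkA_x]
      · exact ⟨i₀, by simp [habar, mkA_a]⟩
      · exact ⟨⟨0, hn⟩, by simp only [habar, mkA_b]⟩
    have TOT : ∀ α, (π.line a).H (zVar n) α = some true ∨
        (π.line a).H (zVar n) α = some false := by
      intro α
      by_cases hf : (π.line a).H (zVar n) α = some false
      · exact Or.inr hf
      · left
        set αup : Fin (kCR n) → Bool :=
          fun v => if i₀.val * n ≤ v.val ∧ v.val < i₀.val * n + n then true else α v with hup
        have hupx : ∀ j' : Fin n, αup (xVar n i₀ j') = true := by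
          intro j'
          have := j'.isLt
          simp only [hup, xVar]
          rw [if_pos]
          constructor
          · omega
          · omega
        have e1 := A10 a Relation.ReflTransGen.refl α αup (fun j' _ => hupx j') hf
        have e2 := A9 a Relation.ReflTransGen.refl αup abar
          (fun j' => by rw [hupx j']; simp only [habar, mkA_x])
        rw [e1, e2, hforce]
    have h1' : (π.line a).H (zVar n) α₁ = some true := by
      rcases TOT α₁ with h | h
      · exact h
      · exfalso
        rw [hHs, unionStrat_some _ _ _ _ h] at h₁
        simp at h₁
    have h2' : (π.line a).H (zVar n) α₂ = some false := by
      rcases TOT α₂ with h | h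
      · exfalso
        rw [hHs, unionStrat_some _ _ _ _ h] at h₂
        simp at h₂
      · exact h
    have hrows : ∀ j' : Fin n, α₁ (xVar n i₀ j') = α₂ (xVar n i₀ j') := by
      intro j'
      simp only [hα₁, hα₂, mkA_x, hX₁]
      rw [if_neg (fun h => hisne h.symm)]
    have hagree := A9 a Relation.ReflTransGen.refl α₁ α₂ hrows
    rw [h1', h2'] at hagree
    simp at hagree

end LeafA

section LeafB

/-- **Key lemma, case B.** A line with pivot `b_{j₀}` whose clause is on
x-variables only, reachable to the final line, has at least `n-1` literals. -/
lemma leafB {n : ℕ} (π : Deriv (CRqbf n)) (hreg : SRegular π (ABSet n))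
    (s a b : ℕ) (j₀ : Fin n)
    (hs : s < π.m) (hsr : Reaches π s (π.m - 1))
    (hj : π.just s = Just.res a b (bVar n j₀))
    (hX : ∀ l ∈ (π.line s).C, ∃ i' j' : Fin n, l.1 = xVar n i' j') :
    n - 1 ≤ (π.line s).C.card := by
  classical
  have hn : 0 < n := j₀.pos
  have hstep := π.step s hs
  rw [hj] at hstep
  obtain ⟨ha, hb, hq, hpa, hpb, hCeq, hH⟩ := hstep
  have ham : a < π.m := lt_trans ha hs
  have hCa_sub : ∀ l ∈ (π.line a).C, l ≠ (bVar n j₀, true) → l ∈ (π.line s).C := by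
    intro l hl hne
    rw [hCeq]
    exact Finset.mem_union_left _ (Finset.mem_erase.2 ⟨hne, hl⟩)
  have hnotin : ∀ (v : Fin (kCR n)) (p : Bool), (∀ i' j' : Fin n, v ≠ xVar n i' j') →
      (v, p) ∉ (π.line s).C := by
    intro v p hv hmem
    obtain ⟨i', j', hveq⟩ := hX _ hmem
    exact hv i' j' hveq
  have B1 : ∀ t a' b', Reaches π t a → π.just t = Just.res a' b' (bVar n j₀) → False := by
    intro t a' b' hta hjt
    have htm : t < π.m := lt_of_le_of_lt (reaches_le π hta) ham
    obtain ⟨ℓ, hax, hpath⟩ := exists_axiom_ancestor π t htm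
    refine hreg ⟨t, s, ℓ, a', b', a, b, bVar n j₀, ?_, Or.inr ⟨j₀, rfl⟩, hjt, hj, hax, hpath,
      hta.tail ⟨hs, a, b, bVar n j₀, hj, Or.inl rfl⟩, hsr⟩
    have := reaches_le π hta
    omega
  have B2 : ∀ t, Reaches π t a → π.just t ≠ Just.ax (LBclause n) := by
    intro t hta hjt
    have htm : t < π.m := lt_of_le_of_lt (reaches_le π hta) ham
    have hst := π.step t htm
    rw [hjt] at hst
    obtain ⟨hmem, hCeq', -⟩ := hst
    have hlit : (bVar n j₀, false) ∈ (π.line t).C := by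
      rw [hCeq', existSub_LB]
      exact (mem_LB_iff _).2 ⟨j₀, rfl⟩
    have hnot : (bVar n j₀, false) ∉ (π.line a).C := by
      intro hmem'
      exact hnotin _ _ (fun i' j' h => (xVar_ne_bVar i' j' j₀) h.symm)
        (hCa_sub _ hmem' (by simp))
    obtain ⟨t', a', b', -, hjt', -, ht'a⟩ := lit_removed π hta _ hlit hnot
    exact B1 t' a' b' ht'a hjt'
  have B3 : ∀ ℓ (j' : Fin n), Reaches π ℓ a → (bVar n j', false) ∉ (π.line ℓ).C := by
    intro ℓ j' hℓa hmem
    have hℓm : ℓ < π.m := lt_of_le_of_lt (reaches_le π hℓa) ham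
    obtain ⟨ℓ₀, C, h1, h2, h3, h4, h5⟩ := lit_origin π ℓ hℓm _ hmem
    have hC : C = LBclause n := loc_bFalse h3 ((mem_existSub_iff _ _).1 h4).1
    exact B2 ℓ₀ (h5.trans hℓa) (hC ▸ h2)
  have B4 : ∀ ℓ (j' : Fin n), j' ≠ j₀ → Reaches π ℓ a → (bVar n j', true) ∉ (π.line ℓ).C := by
    intro ℓ j' hne hℓa hmem
    have hnot : (bVar n j', true) ∉ (π.line a).C := by
      intro hmem'
      refine hnotin _ _ (fun i'' j'' h => (xVar_ne_bVar i'' j'' j') h.symm)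
        (hCa_sub _ hmem' ?_)
      intro h
      exact hne (bVar_inj (congrArg Prod.fst h))
    obtain ⟨t', a', b', ht'm, hjt', -, ht'a⟩ := lit_removed π hℓa _ hmem hnot
    have hst' := π.step t' ht'm
    rw [hjt'] at hst'
    obtain ⟨ha', hb', -, -, hpb', -⟩ := hst'
    exact B3 b' j'
      ((Relation.ReflTransGen.single ⟨ht'm, a', b', _, hjt', Or.inr rfl⟩).trans ht'a) hpb'
  have B6 : ∀ ℓ (i' j' : Fin n), j' ≠ j₀ → Reaches π ℓ a →
      π.just ℓ ≠ Just.ax (Bclause n i' j') := by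
    intro ℓ i' j' hne hℓa hjt
    have hℓm : ℓ < π.m := lt_of_le_of_lt (reaches_le π hℓa) ham
    have hst := π.step ℓ hℓm
    rw [hjt] at hst
    obtain ⟨-, hCeq', -⟩ := hst
    have : (bVar n j', true) ∈ (π.line ℓ).C := by
      rw [hCeq']
      exact (mem_existSub_B _ _ _).2 (Or.inr rfl)
    exact B4 ℓ j' hne hℓa this
  have Bneg : ∀ ℓ (i' j' : Fin n), j' ≠ j₀ → Reaches π ℓ a →
      (xVar n i' j', false) ∉ (π.line ℓ).C := by
    intro ℓ i' j' hne hℓa hmem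
    have hℓm : ℓ < π.m := lt_of_le_of_lt (reaches_le π hℓa) ham
    obtain ⟨ℓ₀, C, h1, h2, h3, h4, h5⟩ := lit_origin π ℓ hℓm _ hmem
    have hC : C = Bclause n i' j' := loc_xFalse h3 ((mem_existSub_iff _ _).1 h4).1
    exact B6 ℓ₀ i' j' hne (h5.trans hℓa) (hC ▸ h2)
  have B7 : ∀ ℓ, Reaches π ℓ a → ∀ (i' : Fin n), (xVar n i' j₀, false) ∈ (π.line ℓ).C →
      π.just ℓ = Just.ax (Bclause n i' j₀) := by
    intro ℓ
    induction ℓ using Nat.strong_induction_on with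
    | _ ℓ IH =>
    intro hℓa i' hmem
    have hℓm : ℓ < π.m := lt_of_le_of_lt (reaches_le π hℓa) ham
    cases hjℓ : π.just ℓ with
    | ax C =>
      have hst := π.step ℓ hℓm
      rw [hjℓ] at hst
      obtain ⟨h3, hCeq', -⟩ := hst
      rw [hCeq'] at hmem
      rw [loc_xFalse h3 ((mem_existSub_iff _ _).1 hmem).1]
    | res a' b' x' =>
      exfalso
      have hst := π.step ℓ hℓm
      rw [hjℓ] at hst
      obtain ⟨ha', hb', hq', hpa', hpb', hCeq', -⟩ := hst
      have hra : Reaches π a' a :=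
        (Relation.ReflTransGen.single ⟨hℓm, a', b', x', hjℓ, Or.inl rfl⟩).trans hℓa
      have hrb : Reaches π b' a :=
        (Relation.ReflTransGen.single ⟨hℓm, a', b', x', hjℓ, Or.inr rfl⟩).trans hℓa
      rw [hCeq'] at hmem
      rcases Finset.mem_union.1 hmem with hm | hm
      · obtain ⟨hne, hm'⟩ := Finset.mem_erase.1 hm
        have hax := IH a' ha' hra i' hm'
        have hst2 := π.step a' (lt_of_le_of_lt (reaches_le π hra) ham)
        rw [hax] at hst2
        obtain ⟨-, hCeq2, -⟩ := hst2
        rw [hCeq2] at hpa'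
        rcases (mem_existSub_B _ _ _).1 hpa' with h | h
        · exact absurd (congrArg Prod.snd h) (by simp)
        · have hx : x' = bVar n j₀ := congrArg Prod.fst h
          exact B1 ℓ a' b' hℓa (hx ▸ hjℓ)
      · obtain ⟨hne, hm'⟩ := Finset.mem_erase.1 hm
        have hax := IH b' hb' hrb i' hm'
        have hst2 := π.step b' (lt_of_le_of_lt (reaches_le π hrb) ham)
        rw [hax] at hst2
        obtain ⟨-, hCeq2, -⟩ := hst2
        rw [hCeq2] at hpb'
        rcases (mem_existSub_B _ _ _).1 hpb' with h | h
        · exact hne h.symm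
        · exact absurd (congrArg Prod.snd h) (by simp)
  have classify : ∀ ℓ a' b' (x' : Fin (kCR n)), Reaches π ℓ a → π.just ℓ = Just.res a' b' x' →
      (∃ i' : Fin n, x' = xVar n i' j₀ ∧ π.just b' = Just.ax (Bclause n i' j₀)) ∨
      (∃ i' : Fin n, x' = aVar n i') := by
    intro ℓ a' b' x' hℓa hjℓ
    have hℓm : ℓ < π.m := lt_of_le_of_lt (reaches_le π hℓa) ham
    have hst := π.step ℓ hℓm
    rw [hjℓ] at hst
    obtain ⟨ha', hb', hq', hpa', hpb', -, -⟩ := hst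
    have hra : Reaches π a' a :=
      (Relation.ReflTransGen.single ⟨hℓm, a', b', x', hjℓ, Or.inl rfl⟩).trans hℓa
    have hrb : Reaches π b' a :=
      (Relation.ReflTransGen.single ⟨hℓm, a', b', x', hjℓ, Or.inr rfl⟩).trans hℓa
    rcases var_trichotomy hn x' with ⟨ix, jx, rfl⟩ | rfl | ⟨ix, rfl⟩ | ⟨jx, rfl⟩
    · by_cases hjx : jx = j₀
      · subst hjx
        exact Or.inl ⟨ix, rfl, B7 b' hrb ix hpb'⟩
      · exact absurd hpb' (Bneg b' ix jx hjx hrb)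
    · rw [q_zVar] at hq'; simp at hq'
    · exact Or.inr ⟨ix, rfl⟩
    · exfalso
      by_cases hjx : jx = j₀
      · exact B1 ℓ a' b' hℓa (hjx ▸ hjℓ)
      · exact B3 b' jx hrb hpb'
  have B9 : ∀ ℓ, Reaches π ℓ a → ∀ α α' : Fin (kCR n) → Bool,
      (∀ i' : Fin n, α (xVar n i' j₀) = α' (xVar n i' j₀)) →
      (π.line ℓ).H (zVar n) α = (π.line ℓ).H (zVar n) α' := by
    intro ℓ
    induction ℓ using Nat.strong_induction_on with
    | _ ℓ IH =>
    intro hℓa α α' hagree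
    have hℓm : ℓ < π.m := lt_of_le_of_lt (reaches_le π hℓa) ham
    cases hjℓ : π.just ℓ with
    | ax C =>
      have hst := π.step ℓ hℓm
      rw [hjℓ] at hst
      obtain ⟨-, -, hHax⟩ := hst
      rw [hHax (zVar n) q_zVar]
      rfl
    | res a' b' x' =>
      have hst := π.step ℓ hℓm
      rw [hjℓ] at hst
      obtain ⟨ha', hb', hq', hpa', hpb', -, hH'⟩ := hst
      have hra : Reaches π a' a :=
        (Relation.ReflTransGen.single ⟨hℓm, a', b', x', hjℓ, Or.inl rfl⟩).trans hℓa
      have hrb : Reaches π b' a :=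
        (Relation.ReflTransGen.single ⟨hℓm, a', b', x', hjℓ, Or.inr rfl⟩).trans hℓa
      rcases classify ℓ a' b' x' hℓa hjℓ with ⟨i', rfl, -⟩ | ⟨i', rfl⟩
      · rw [(hH' (zVar n) q_zVar).1 (xVar_lt_zVar i' j₀)]
        cases hc : α (xVar n i' j₀) with
        | true =>
          rw [iteStrat_pos _ _ _ _ hc, iteStrat_pos _ _ _ _ ((hagree i') ▸ hc)]
          exact IH b' hb' hrb α α' hagree
        | false =>
          rw [iteStrat_neg _ _ _ _ hc, iteStrat_neg _ _ _ _ ((hagree i') ▸ hc)]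
          exact IH a' ha' hra α α' hagree
      · rw [((hH' (zVar n) q_zVar).2 (zVar_lt_aVar i')).2]
        cases hA : (π.line a').H (zVar n) α with
        | none =>
          rw [unionStrat_none _ _ _ hA,
            unionStrat_none _ _ _ ((IH a' ha' hra α α' hagree).symm.trans hA)]
          exact IH b' hb' hrb α α' hagree
        | some c =>
          rw [unionStrat_some _ _ _ _ hA,
            unionStrat_some _ _ _ _ ((IH a' ha' hra α α' hagree).symm.trans hA)]
  have B10 : ∀ ℓ, Reaches π ℓ a → ∀ α α' : Fin (kCR n) → Bool,
      (∀ i' : Fin n, α' (xVar n i' j₀) = true → α (xVar n i' j₀) = true) →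
      (π.line ℓ).H (zVar n) α ≠ some true →
      (π.line ℓ).H (zVar n) α = (π.line ℓ).H (zVar n) α' := by
    intro ℓ
    induction ℓ using Nat.strong_induction_on with
    | _ ℓ IH =>
    intro hℓa α α' hmono hnf
    have hℓm : ℓ < π.m := lt_of_le_of_lt (reaches_le π hℓa) ham
    cases hjℓ : π.just ℓ with
    | ax C =>
      have hst := π.step ℓ hℓm
      rw [hjℓ] at hst
      obtain ⟨-, -, hHax⟩ := hst
      rw [hHax (zVar n) q_zVar]
      rfl
    | res a' b' x' =>
      have hst := π.step ℓ hℓm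
      rw [hjℓ] at hst
      obtain ⟨ha', hb', hq', hpa', hpb', -, hH'⟩ := hst
      have hra : Reaches π a' a :=
        (Relation.ReflTransGen.single ⟨hℓm, a', b', x', hjℓ, Or.inl rfl⟩).trans hℓa
      have hrb : Reaches π b' a :=
        (Relation.ReflTransGen.single ⟨hℓm, a', b', x', hjℓ, Or.inr rfl⟩).trans hℓa
      rcases classify ℓ a' b' x' hℓa hjℓ with ⟨i', rfl, hax⟩ | ⟨i', rfl⟩
      · have hHeq := (hH' (zVar n) q_zVar).1 (xVar_lt_zVar i' j₀)
        have hst2 := π.step b' (lt_of_le_of_lt (reaches_le π hrb) ham)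
        rw [hax] at hst2
        obtain ⟨-, -, hHax2⟩ := hst2
        have hB'z := hHax2 (zVar n) q_zVar
        cases hc : α (xVar n i' j₀) with
        | true =>
          exfalso
          apply hnf
          rw [hHeq, iteStrat_pos _ _ _ _ hc, hB'z]
          exact axiomStrat_B i' j₀ α
        | false =>
          have hc' : α' (xVar n i' j₀) = false := by
            cases hcc : α' (xVar n i' j₀) with
            | false => rfl
            | true =>
              have := hmono i' hcc
              rw [hc] at this
              exact absurd this (by simp)
          rw [hHeq, iteStrat_neg _ _ _ _ hc, iteStrat_neg _ _ _ _ hc']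
          apply IH a' ha' hra α α' hmono
          rw [← iteStrat_neg (xVar n i' j₀) ((π.line b').H (zVar n)) ((π.line a').H (zVar n)) α hc,
            ← hHeq]
          exact hnf
      · have hHeq := ((hH' (zVar n) q_zVar).2 (zVar_lt_aVar i')).2
        cases hA : (π.line a').H (zVar n) α with
        | none =>
          have heq := IH a' ha' hra α α' hmono (by rw [hA]; simp)
          rw [hHeq, unionStrat_none _ _ _ hA, unionStrat_none _ _ _ (heq.symm.trans hA)]
          apply IH b' hb' hrb α α' hmono
          rw [← unionStrat_none ((π.line a').H (zVar n)) ((π.line b').H (zVar n)) α hA, ← hHeq]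
          exact hnf
        | some c =>
          have hnf' : c ≠ true := by
            intro h
            subst h
            exact hnf (by rw [hHeq]; exact unionStrat_some _ _ _ _ hA)
          have heq := IH a' ha' hra α α' hmono (by rw [hA]; intro h; exact hnf' (Option.some_inj.1 h))
          rw [hHeq, unionStrat_some _ _ _ _ hA, unionStrat_some _ _ _ _ (heq.symm.trans hA)]
  -- === final contradiction ===
  by_contra hcard
  push_neg at hcard
  set T : Finset ℕ := (π.line s).C.image (fun l => l.1.val / n) with hT
  have hTcard : T.card ≤ (π.line s).C.card := Finset.card_image_le
  have hrow : ∃ istar : Fin n, istar.val ∉ T := by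
    by_contra h
    push_neg at h
    have hsub : (Finset.univ : Finset (Fin n)).image Fin.val ⊆ T := by
      intro v hv
      obtain ⟨i, -, rfl⟩ := Finset.mem_image.1 hv
      exact h i
    have h1 : n ≤ T.card := by
      have hv : ((Finset.univ : Finset (Fin n)).image Fin.val).card = n := by
        rw [Finset.card_image_of_injective _ Fin.val_injective, Finset.card_univ,
          Fintype.card_fin]
      have hle := Finset.card_le_card hsub
      omega
    omega
  obtain ⟨istar, hisT⟩ := hrow
  set U : Finset ℕ := (π.line s).C.image (fun l => l.1.val % n) with hU
  have hUcard : U.card ≤ (π.line s).C.card := Finset.card_image_le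
  have hcol : ∃ jstar : Fin n, jstar.val ∉ U ∧ jstar ≠ j₀ := by
    by_contra h
    push_neg at h
    have hsub : (Finset.univ : Finset (Fin n)).image Fin.val ⊆ U ∪ {j₀.val} := by
      intro v hv
      obtain ⟨i, -, rfl⟩ := Finset.mem_image.1 hv
      by_cases hvU : i.val ∈ U
      · exact Finset.mem_union_left _ hvU
      · rw [h i hvU]
        exact Finset.mem_union_right _ (Finset.mem_singleton_self _)
    have h1 : n ≤ (U ∪ {j₀.val}).card := by
      have hv : ((Finset.univ : Finset (Fin n)).image Fin.val).card = n := by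
        rw [Finset.card_image_of_injective _ Fin.val_injective, Finset.card_univ,
          Fintype.card_fin]
      have hle := Finset.card_le_card hsub
      omega
    have h2 : (U ∪ {j₀.val}).card ≤ U.card + 1 :=
      le_trans (Finset.card_union_le _ _) (by simp)
    omega
  obtain ⟨jstar, hjsU, hjsne⟩ := hcol
  have hrowfree : ∀ (j' : Fin n) (p : Bool), (xVar n istar j', p) ∉ (π.line s).C := by
    intro j' p hmem
    exact hisT (hT ▸ Finset.mem_image.2 ⟨_, hmem, xVar_div istar j'⟩)
  have hcolfree : ∀ (i' : Fin n) (p : Bool), (xVar n i' jstar, p) ∉ (π.line s).C := by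
    intro i' p hmem
    exact hjsU (hU ▸ Finset.mem_image.2 ⟨_, hmem, xVar_mod i' jstar⟩)
  set ξ : Fin n → Fin n → Bool :=
    fun i j => decide ((xVar n i j, false) ∈ (π.line s).C) with hξ
  have hIsC := (π.lineOK s hs).1
  have hξT : ∀ i' j' : Fin n, (xVar n i' j', false) ∈ (π.line s).C → ξ i' j' = true := by
    intro i' j' hmem
    simp only [hξ, decide_eq_true_eq]
    exact hmem
  have hξF : ∀ i' j' : Fin n, (xVar n i' j', true) ∈ (π.line s).C → ξ i' j' = false := by
    intro i' j' hmem
    simp only [hξ, decide_eq_false_iff_not]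
    intro hmem'
    exact hIsC _ ⟨hmem, hmem'⟩
  have hfalsC : ∀ (X : Fin n → Fin n → Bool),
      (∀ i' j' : Fin n, X i' j' = ξ i' j' ∨ (∀ p, (xVar n i' j', p) ∉ (π.line s).C)) →
      ∀ Z A B, FalsifiesClause (mkA hn X Z A B) (π.line s).C := by
    intro X hXp Z A B l hl
    obtain ⟨v, p⟩ := l
    obtain ⟨i', j', hv⟩ := hX _ hl
    have hv' : v = xVar n i' j' := hv
    subst hv'
    rcases hXp i' j' with hXv | hfree
    · show mkA hn X Z A B (xVar n i' j') = !p
      rw [mkA_x]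
      cases p with
      | false =>
        rw [hXv]
        simpa using hξT i' j' hl
      | true =>
        rw [hXv]
        simpa using hξF i' j' hl
    · exact absurd hl (hfree p)
  set X₁ : Fin n → Fin n → Bool := fun i j => if i = istar then true else ξ i j with hX₁
  set A₁ : Fin n → Bool := fun i => if i = istar then false else true with hA₁
  set α₁ : Fin (kCR n) → Bool := mkA hn X₁ false A₁ (fun _ => false) with hα₁
  set X₂ : Fin n → Fin n → Bool :=
    fun i j => if i = istar ∧ j = j₀ then true else ξ i j with hX₂
  set Bc : Fin n → Bool := fun j => decide (∃ i', X₂ i' j = true) with hBc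
  set α₂ : Fin (kCR n) → Bool := mkA hn X₂ false (fun _ => false) Bc with hα₂
  have hfals₁ : FalsifiesClause α₁ (π.line s).C := by
    rw [hα₁]
    apply hfalsC
    intro i' j'
    by_cases hi : i' = istar
    · subst hi
      exact Or.inr (fun p => hrowfree j' p)
    · left
      simp only [hX₁, if_neg hi]
  have hfals₂ : FalsifiesClause α₂ (π.line s).C := by
    rw [hα₂]
    apply hfalsC
    intro i' j'
    by_cases hi : i' = istar
    · subst hi
      exact Or.inr (fun p => hrowfree j' p)
    · left
      simp only [hX₂]
      rw [if_neg (by intro h; exact hi h.1)]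
  have h₁ : (π.line s).H (zVar n) α₁ = some true := by
    apply force_true π hn hs α₁ hfals₁
    apply no_fals_zfalse
    · intro i j
      by_cases hi : i = istar
      · left
        simp only [hα₁, mkA_x, hX₁, if_pos hi]
      · right
        simp only [hα₁, mkA_a, hA₁, if_neg hi]
    · exact ⟨istar, by simp [hα₁, mkA_a, hA₁]⟩
    · exact ⟨⟨0, hn⟩, by simp only [hα₁, mkA_b]⟩
  have h₂ : (π.line s).H (zVar n) α₂ = some false := by
    apply force_false π hn hs α₂ hfals₂
    apply no_fals_ztrue
    · intro i j
      by_cases hij : X₂ i j = true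
      · right
        simp only [hα₂, mkA_b, hBc, decide_eq_true_eq]
        exact ⟨i, hij⟩
      · left
        simp only [hα₂, mkA_x]
        simpa using hij
    · refine ⟨jstar, ?_⟩
      simp only [hα₂, mkA_b, hBc, decide_eq_false_iff_not]
      rintro ⟨i', hi'⟩
      simp only [hX₂] at hi'
      rw [if_neg (by intro h; exact hjsne h.2)] at hi'
      simp only [hξ, decide_eq_true_eq] at hi'
      exact hcolfree i' false hi'
    · exact ⟨⟨0, hn⟩, by simp only [hα₂, mkA_a]⟩
  have hHs := ((hH (zVar n) q_zVar).2 (zVar_lt_bVar j₀)).2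
  cases hja : π.just a with
  | ax C =>
    have hst2 := π.step a ham
    rw [hja] at hst2
    obtain ⟨hCm, hCeq2, hHax⟩ := hst2
    have hmemB : (bVar n j₀, true) ∈ existSub (CRqbf n) C := hCeq2 ▸ hpa
    obtain ⟨ii, rfl⟩ := loc_bTrue hCm ((mem_existSub_iff _ _).1 hmemB).1
    have hsf : (π.line s).H (zVar n) α₂ = some true := by
      rw [hHs]
      apply unionStrat_some
      rw [hHax (zVar n) q_zVar]
      exact axiomStrat_B ii j₀ α₂
    rw [hsf] at h₂
    simp at h₂
  | res a2 b2 x2 =>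
    set abar : Fin (kCR n) → Bool :=
      mkA hn (fun _ _ => false) false (fun _ => false) (fun _ => false) with habar
    have hfalsa : FalsifiesClause abar (π.line a).C := by
      intro l hl
      obtain ⟨v, p⟩ := l
      by_cases hvp : (v, p) = (bVar n j₀, true)
      · have hv := congrArg Prod.fst hvp
        have hp := congrArg Prod.snd hvp
        simp only at hv hp
        subst hv
        subst hp
        show abar (bVar n j₀) = !true
        simp [habar, mkA_b]
      · have hls := hCa_sub _ hl hvp
        obtain ⟨i', j', hv⟩ := hX _ hls
        have hv' : v = xVar n i' j' := hv
        subst hv'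
        cases p with
        | false =>
          exfalso
          by_cases hjx : j' = j₀
          · subst hjx
            have hax := B7 a Relation.ReflTransGen.refl i' hl
            rw [hja] at hax
            cases hax
          · exact Bneg a i' j' hjx Relation.ReflTransGen.refl hl
        | true =>
          show abar (xVar n i' j') = !true
          simp only [habar, mkA_x, Bool.not_true]
    have hforce : (π.line a).H (zVar n) abar = some false := by
      apply force_false π hn ham abar hfalsa
      apply no_fals_ztrue
      · intro i j
        left
        simp only [habar, mkA_x]
      · exact ⟨⟨0, hn⟩, by simp only [habar, mkA_b]⟩
      · exact ⟨⟨0, hn⟩, by simp only [habar, mkA_a]⟩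
    have TOT : ∀ α, (π.line a).H (zVar n) α = some true ∨
        (π.line a).H (zVar n) α = some false := by
      intro α
      by_cases hf : (π.line a).H (zVar n) α = some true
      · exact Or.inl hf
      · right
        set αdn : Fin (kCR n) → Bool :=
          fun v => if v.val < n * n ∧ v.val % n = j₀.val then false else α v with hdn
        have hdnx : ∀ i' : Fin n, αdn (xVar n i' j₀) = false := by
          intro i'
          simp only [hdn]
          rw [if_pos ⟨xVar_lt_sq n i' j₀, xVar_mod i' j₀⟩]
        have e1 := B10 a Relation.ReflTransGen.refl α αdn
          (fun i' h => by rw [hdnx i'] at h; exact absurd h (by simp)) hf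
        have e2 := B9 a Relation.ReflTransGen.refl αdn abar
          (fun i' => by rw [hdnx i']; simp only [habar, mkA_x])
        rw [e1, e2, hforce]
    have h1' : (π.line a).H (zVar n) α₁ = some true := by
      rcases TOT α₁ with h | h
      · exact h
      · exfalso
        rw [hHs, unionStrat_some _ _ _ _ h] at h₁
        simp at h₁
    have h2' : (π.line a).H (zVar n) α₂ = some false := by
      rcases TOT α₂ with h | h
      · exfalso
        rw [hHs, unionStrat_some _ _ _ _ h] at h₂
        simp at h₂
      · exact h
    have hcols : ∀ i' : Fin n, α₁ (xVar n i' j₀) = α₂ (xVar n i' j₀) := by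
      intro i'
      simp only [hα₁, hα₂, mkA_x, hX₁, hX₂]
      by_cases hi : i' = istar
      · rw [if_pos hi, if_pos ⟨hi, trivial⟩]
      · rw [if_neg hi, if_neg (by intro h; exact hi h.1)]
    have hagree := B9 a Relation.ReflTransGen.refl α₁ α₂ hcols
    rw [h1', h2'] at hagree
    simp at hagree

end LeafB

section Descent

variable {n : ℕ} (π : Deriv (CRqbf n))

/-- Descend from a line with an x-only falsified clause to a line whose pivot
is an `A ∪ B` variable. -/
lemma descent (hn : 0 < n) (α : Fin (kCR n) → Bool) :
    ∀ i, i < π.m → Reaches π i (π.m - 1) →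
    (∀ l ∈ (π.line i).C, ∃ i' j' : Fin n, l.1 = xVar n i' j') →
    FalsifiesClause α (π.line i).C →
    ∃ s aa bb : ℕ, ∃ w : Fin (kCR n), s < π.m ∧ Reaches π s (π.m - 1) ∧
      (∀ l ∈ (π.line s).C, ∃ i' j' : Fin n, l.1 = xVar n i' j') ∧
      FalsifiesClause α (π.line s).C ∧
      π.just s = Just.res aa bb w ∧
      ((∃ i₀ : Fin n, w = aVar n i₀) ∨ (∃ j₀ : Fin n, w = bVar n j₀)) := by
  intro i
  induction i using Nat.strong_induction_on with
  | _ i IH =>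
  intro hi hir hXi hfals
  cases hj : π.just i with
  | ax C =>
    exfalso
    have hst := π.step i hi
    rw [hj] at hst
    obtain ⟨hCm, hCeq, -⟩ := hst
    rcases (mem_CRmatrix_iff C).1 hCm with ⟨i', j', rfl⟩ | ⟨i', j', rfl⟩ | rfl | rfl
    · have hmem : (aVar n i', true) ∈ (π.line i).C := by
        rw [hCeq]
        exact (mem_existSub_A _ _ _).2 (Or.inr rfl)
      obtain ⟨i'', j'', hv⟩ := hXi _ hmem
      exact (xVar_ne_aVar i'' j'' i') hv.symm
    · have hmem : (bVar n j', true) ∈ (π.line i).C := by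
        rw [hCeq]
        exact (mem_existSub_B _ _ _).2 (Or.inr rfl)
      obtain ⟨i'', j'', hv⟩ := hXi _ hmem
      exact (xVar_ne_bVar i'' j'' j') hv.symm
    · have hmem : (aVar n ⟨0, hn⟩, false) ∈ (π.line i).C := by
        rw [hCeq, existSub_LA]
        exact (mem_LA_iff _).2 ⟨⟨0, hn⟩, rfl⟩
      obtain ⟨i'', j'', hv⟩ := hXi _ hmem
      exact (xVar_ne_aVar i'' j'' ⟨0, hn⟩) hv.symm
    · have hmem : (bVar n ⟨0, hn⟩, false) ∈ (π.line i).C := by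
        rw [hCeq, existSub_LB]
        exact (mem_LB_iff _).2 ⟨⟨0, hn⟩, rfl⟩
      obtain ⟨i'', j'', hv⟩ := hXi _ hmem
      exact (xVar_ne_bVar i'' j'' ⟨0, hn⟩) hv.symm
  | res aa bb w =>
    have hst := π.step i hi
    rw [hj] at hst
    obtain ⟨ha, hb, hq, hpa, hpb, hCeq, -⟩ := hst
    rcases var_trichotomy hn w with ⟨ix, jx, rfl⟩ | rfl | ⟨ix, rfl⟩ | ⟨jx, rfl⟩
    · cases hα : α (xVar n ix jx) with
      | false =>
        apply IH aa ha (lt_trans ha hi)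
        · exact Relation.ReflTransGen.head ⟨hi, aa, bb, _, hj, Or.inl rfl⟩ hir
        · intro l hl
          by_cases hlp : l = (xVar n ix jx, true)
          · exact ⟨ix, jx, by rw [hlp]⟩
          · exact hXi l (hCeq ▸ Finset.mem_union_left _ (Finset.mem_erase.2 ⟨hlp, hl⟩))
        · intro l hl
          by_cases hlp : l = (xVar n ix jx, true)
          · rw [hlp]
            simpa using hα
          · exact hfals l (hCeq ▸ Finset.mem_union_left _ (Finset.mem_erase.2 ⟨hlp, hl⟩))
      | true =>
        apply IH bb hb (lt_trans hb hi)
        · exact Relation.ReflTransGen.head ⟨hi, aa, bb, _, hj, Or.inr rfl⟩ hir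
        · intro l hl
          by_cases hlp : l = (xVar n ix jx, false)
          · exact ⟨ix, jx, by rw [hlp]⟩
          · exact hXi l (hCeq ▸ Finset.mem_union_right _ (Finset.mem_erase.2 ⟨hlp, hl⟩))
        · intro l hl
          by_cases hlp : l = (xVar n ix jx, false)
          · rw [hlp]
            simpa using hα
          · exact hfals l (hCeq ▸ Finset.mem_union_right _ (Finset.mem_erase.2 ⟨hlp, hl⟩))
    · rw [q_zVar] at hq
      simp at hq
    · exact ⟨i, aa, bb, aVar n ix, hi, hir, hXi, hfals, hj, Or.inl ⟨ix, rfl⟩⟩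
    · exact ⟨i, aa, bb, bVar n jx, hi, hir, hXi, hfals, hj, Or.inr ⟨jx, rfl⟩⟩

end Descent

section Mask

/-- Any set of boolean functions pairwise determined outside `Q` has size at
most `2 ^ (|γ| - |Q|)`. -/
lemma fiber_card_le {γ : Type*} [DecidableEq γ] [Fintype γ] (S : Finset (γ → Bool))
    (Q : Finset γ)
    (hdet : ∀ g ∈ S, ∀ g' ∈ S, (∀ p : γ, p ∉ Q → g p = g' p) → g = g') :
    S.card ≤ 2 ^ (Fintype.card γ - Q.card) := by
  classical
  have hinj : S.card ≤ (Finset.univ : Finset ({p : γ // p ∉ Q} → Bool)).card := by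
    refine Finset.card_le_card_of_injOn (fun g q => g q.1)
      (fun g _ => Finset.mem_univ _) ?_
    intro g hg g' hg' heq
    exact hdet g hg g' hg' (fun p hp => congrFun heq ⟨p, hp⟩)
  have hcQ : (Finset.univ : Finset ({p : γ // p ∉ Q} → Bool)).card
      = 2 ^ (Fintype.card γ - Q.card) := by
    rw [Finset.card_univ, Fintype.card_fun, Fintype.card_bool]
    congr 1
    have h1 : Fintype.card {p : γ // p ∉ Q}
        = Fintype.card γ - Fintype.card {p : γ // p ∈ Q} :=
      Fintype.card_subtype_compl _
    have h2 : Fintype.card {p : γ // p ∈ Q} = Q.card := Fintype.card_coe Q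
    rw [h1, h2]
  exact le_trans hinj (le_of_eq hcQ)

end Mask

end MResR

set_option maxHeartbeats 1600000 in
open MResR in
/-- For `n > 2`, every `(A ∪ B)`-regular function-level
MRes-R refutation of `CR_n` has at least `2^(n-1)` lines. -/
theorem crn_lower_bound_ABregular {n : ℕ} (hn : 2 < n)
    (π : Deriv (CRqbf n)) (href : IsRefutation π)
    (hreg : SRegular π (ABSet n)) :
    2 ^ (n - 1) ≤ π.m := by
  classical
  have hn0 : 0 < n := by omega
  -- for each x-assignment β, a leaf line with a big clause falsified by β
  have key : ∀ β : Fin n × Fin n → Bool,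
      ∃ s, s < π.m ∧ n - 1 ≤ (π.line s).C.card ∧
        (∀ l ∈ (π.line s).C, ∃ i' j' : Fin n, l.1 = xVar n i' j') ∧
        ∀ (i j : Fin n) (p : Bool), (xVar n i j, p) ∈ (π.line s).C → β (i, j) = !p := by
    intro β
    have hroot : π.m - 1 < π.m := by
      have := π.m_pos
      omega
    have hempty : (π.line (π.m - 1)).C = ∅ := href
    obtain ⟨s, aa, bb, w, hs, hsr, hXs, hfals, hjust, hw⟩ :=
      descent π hn0 (mkA hn0 (fun i j => β (i, j)) false (fun _ => false) (fun _ => false))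
        (π.m - 1) hroot Relation.ReflTransGen.refl
        (by rw [hempty]; intro l hl; simp at hl)
        (by rw [hempty]; intro l hl; simp at hl)
    refine ⟨s, hs, ?_, hXs, ?_⟩
    · rcases hw with ⟨i₀, rfl⟩ | ⟨j₀, rfl⟩
      · exact leafA π hreg s aa bb i₀ hs hsr hjust hXs
      · exact leafB π hreg s aa bb j₀ hs hsr hjust hXs
    · intro i j p hmem
      have hv := hfals _ hmem
      rw [mkA_x] at hv
      exact hv
  choose leaf hleaf1 hleaf2 hleaf3 hleaf4 using key
  -- counting: each fiber of `leaf` is contained in a codimension-(n-1) subcube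
  have hcount : ∀ s : ℕ,
      (Finset.univ.filter (fun β : Fin n × Fin n → Bool => leaf β = s)).card
        ≤ 2 ^ (n * n - (n - 1)) := by
    intro s
    rcases Finset.eq_empty_or_nonempty
        (Finset.univ.filter (fun β : Fin n × Fin n → Bool => leaf β = s)) with he | hne
    · rw [he]
      simp
    · obtain ⟨β₀, hβ₀⟩ := hne
      have hβ₀s : leaf β₀ = s := (Finset.mem_filter.1 hβ₀).2
      have hsm : s < π.m := hβ₀s ▸ hleaf1 β₀
      have hIs : IsClause (π.line s).C := (π.lineOK s hsm).1
      have hXs := hβ₀s ▸ hleaf3 β₀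
      set Q : Finset (Fin n × Fin n) :=
        Finset.univ.filter
          (fun p : Fin n × Fin n => ∃ pol, (xVar n p.1 p.2, pol) ∈ (π.line s).C) with hQ
      have hdec : ∀ (l : Fin (kCR n) × Bool) (i' j' : Fin n), l.1 = xVar n i' j' →
          (l.1.val / n) % n = i'.val ∧ l.1.val % n = j'.val := by
        intro l i' j' hv
        have hval : l.1.val = (xVar n i' j').val := congrArg Fin.val hv
        rw [hval, xVar_div, xVar_mod]
        exact ⟨Nat.mod_eq_of_lt i'.isLt, rfl⟩
      have hQcard : n - 1 ≤ Q.card := by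
        have h1 : n - 1 ≤ (π.line s).C.card := hβ₀s ▸ hleaf2 β₀
        refine le_trans h1 (Finset.card_le_card_of_injOn
          (fun l => ((⟨(l.1.val / n) % n, Nat.mod_lt _ hn0⟩ : Fin n),
            (⟨l.1.val % n, Nat.mod_lt _ hn0⟩ : Fin n))) ?_ ?_)
        · intro l hl
          obtain ⟨i', j', hv⟩ := hXs _ hl
          obtain ⟨h1', h2'⟩ := hdec l i' j' hv
          have e1 : (⟨(l.1.val / n) % n, Nat.mod_lt _ hn0⟩ : Fin n) = i' := Fin.ext h1'
          have e2 : (⟨l.1.val % n, Nat.mod_lt _ hn0⟩ : Fin n) = j' := Fin.ext h2'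
          have hmem2 : (xVar n (⟨(l.1.val / n) % n, Nat.mod_lt _ hn0⟩ : Fin n)
              (⟨l.1.val % n, Nat.mod_lt _ hn0⟩ : Fin n), l.2) ∈ (π.line s).C := by
            rw [e1, e2, ← hv]
            exact hl
          exact Finset.mem_filter.2 ⟨Finset.mem_univ _, l.2, hmem2⟩
        · intro l1 hl1 l2 hl2 heq
          obtain ⟨i1, j1, hv1⟩ := hXs _ hl1
          obtain ⟨i2, j2, hv2⟩ := hXs _ hl2
          obtain ⟨ha1, hb1⟩ := hdec l1 i1 j1 hv1
          obtain ⟨ha2, hb2⟩ := hdec l2 i2 j2 hv2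
          have hfst := congrArg (fun q : Fin n × Fin n => q.1.val) heq
          have hsnd := congrArg (fun q : Fin n × Fin n => q.2.val) heq
          simp only at hfst hsnd
          have hi : i1 = i2 := Fin.ext (by rw [← ha1, ← ha2]; exact hfst)
          have hj : j1 = j2 := Fin.ext (by rw [← hb1, ← hb2]; exact hsnd)
          have hvar : l1.1 = l2.1 := by rw [hv1, hv2, hi, hj]
          by_cases hpol : l1.2 = l2.2
          · exact Prod.ext hvar hpol
          · exfalso
            cases hc1 : l1.2 with
            | true =>
              have hc2 : l2.2 = false := by
                cases hc2 : l2.2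
                · rfl
                · rw [hc1, hc2] at hpol; simp at hpol
              apply hIs l1.1
              constructor
              · have : (l1.1, l1.2) ∈ (π.line s).C := hl1
                rw [hc1] at this
                exact this
              · have : (l2.1, l2.2) ∈ (π.line s).C := hl2
                rw [hc2, ← hvar] at this
                exact this
            | false =>
              have hc2 : l2.2 = true := by
                cases hc2 : l2.2
                · rw [hc1, hc2] at hpol; simp at hpol
                · rfl
              apply hIs l1.1
              constructor
              · have : (l2.1, l2.2) ∈ (π.line s).C := hl2
                rw [hc2, ← hvar] at this
                exact this
              · have : (l1.1, l1.2) ∈ (π.line s).C := hl1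
                rw [hc1] at this
                exact this
      -- every fiber member is determined off Q
      have hfib : (Finset.univ.filter (fun β : Fin n × Fin n → Bool => leaf β = s)).card
          ≤ 2 ^ (Fintype.card (Fin n × Fin n) - Q.card) := by
        refine fiber_card_le _ Q ?_
        intro β hβ β' hβ' hagree
        have hβs : leaf β = s := (Finset.mem_filter.1 hβ).2
        have hβ's : leaf β' = s := (Finset.mem_filter.1 hβ').2
        funext p
        by_cases hp : p ∈ Q
        · obtain ⟨pol, hpol⟩ := (Finset.mem_filter.1 hp).2
          have e1 : β (p.1, p.2) = !pol := hleaf4 β p.1 p.2 pol (by rw [hβs]; exact hpol)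
          have e2 : β' (p.1, p.2) = !pol := hleaf4 β' p.1 p.2 pol (by rw [hβ's]; exact hpol)
          have hpe : (p.1, p.2) = p := rfl
          rw [hpe] at e1 e2
          rw [e1, e2]
        · exact hagree p hp
      have hcardprod : Fintype.card (Fin n × Fin n) = n * n := by
        rw [Fintype.card_prod, Fintype.card_fin]
      calc (Finset.univ.filter (fun β : Fin n × Fin n → Bool => leaf β = s)).card
          ≤ 2 ^ (n * n - Q.card) := by rw [← hcardprod]; exact hfib
        _ ≤ 2 ^ (n * n - (n - 1)) := Nat.pow_le_pow_right (by norm_num) (by omega)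
  -- put it together
  have hcardB : (Finset.univ : Finset (Fin n × Fin n → Bool)).card = 2 ^ (n * n) := by
    rw [Finset.card_univ, Fintype.card_fun, Fintype.card_bool, Fintype.card_prod,
      Fintype.card_fin]
  have hunion : (Finset.univ : Finset (Fin n × Fin n → Bool)) ⊆
      (Finset.range π.m).biUnion
        (fun s => Finset.univ.filter (fun β : Fin n × Fin n → Bool => leaf β = s)) := by
    intro β _
    exact Finset.mem_biUnion.2 ⟨leaf β, Finset.mem_range.2 (hleaf1 β),
      Finset.mem_filter.2 ⟨Finset.mem_univ _, rfl⟩⟩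
  have htotal : 2 ^ (n * n) ≤ π.m * 2 ^ (n * n - (n - 1)) := by
    calc 2 ^ (n * n) = (Finset.univ : Finset (Fin n × Fin n → Bool)).card := hcardB.symm
      _ ≤ ((Finset.range π.m).biUnion
            (fun s => Finset.univ.filter (fun β : Fin n × Fin n → Bool => leaf β = s))).card :=
        Finset.card_le_card hunion
      _ ≤ ∑ s ∈ Finset.range π.m,
            (Finset.univ.filter (fun β : Fin n × Fin n → Bool => leaf β = s)).card :=
        Finset.card_biUnion_le
      _ ≤ ∑ _s ∈ Finset.range π.m, 2 ^ (n * n - (n - 1)) :=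
        Finset.sum_le_sum (fun s _ => hcount s)
      _ = π.m * 2 ^ (n * n - (n - 1)) := by
        rw [Finset.sum_const, Finset.card_range, smul_eq_mul]
  have hsplit : n * n = (n - 1) + (n * n - (n - 1)) := by
    have h1 : n ≤ n * n := Nat.le_mul_of_pos_left n hn0
    omega
  have hpos : 0 < 2 ^ (n * n - (n - 1)) := pow_pos (by norm_num : (0:ℕ) < 2) _
  have h2 : 2 ^ (n - 1) * 2 ^ (n * n - (n - 1)) ≤ π.m * 2 ^ (n * n - (n - 1)) := by
    calc 2 ^ (n - 1) * 2 ^ (n * n - (n - 1)) = 2 ^ (n * n) := by rw [← pow_add, ← hsplit]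
      _ ≤ π.m * 2 ^ (n * n - (n - 1)) := htotal
  exact Nat.le_of_mul_le_mul_right h2 hpos
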